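/- arXiv:2312.16657 — 14 statements merged into one kernel-verified Lean document; each statement's English description precedes it below -/
import Mathlib

section
/- For every natural number n ≥ 1 and all real a, x and φ, one has ∏_{l=0}^{n-1} (a² - 2ax·cos((φ + 2πl)/n) + x²) = a^{2n} - 2aⁿxⁿcos φ + x^{2n}. -/
open Real Finset

lemma key_prod (n : ℕ) (hn : 0 < n) (A B : ℂ) (φ : ℝ) :
    ∏ l ∈ Finset.range n, (A - B * Complex.exp ((((φ + 2 * π * l) / n : ℝ) : ℂ) * Complex.I)) =
      A ^ n - B ^ n * Complex.exp ((φ : ℂ) * Complex.I) := by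
  have hn' : (n : ℂ) ≠ 0 := Nat.cast_ne_zero.mpr hn.ne'
  have hζ : IsPrimitiveRoot (Complex.exp (2 * π * Complex.I / n)) n :=
    Complex.isPrimitiveRoot_exp n hn.ne'
  set α : ℂ := B * Complex.exp ((φ : ℂ) * Complex.I / n) with hα
  have e : α ^ n = B ^ n * Complex.exp ((φ : ℂ) * Complex.I) := by
    rw [hα, mul_pow, ← Complex.exp_nat_mul]
    congr 2
    field_simp
  have h := X_pow_sub_C_eq_prod hζ hn e
  have h2 := congrArg (Polynomial.eval A) h
  simp only [Polynomial.eval_prod, Polynomial.eval_sub, Polynomial.eval_pow,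
    Polynomial.eval_X, Polynomial.eval_C] at h2
  rw [h2]
  apply Finset.prod_congr rfl
  intro l hl
  congr 1
  rw [hα, ← Complex.exp_nat_mul,
    mul_comm (Complex.exp ((l:ℂ) * (2 * π * Complex.I / n))), mul_assoc B, ← Complex.exp_add]
  congr 1
  push_cast
  field_simp

theorem euler_product (n : ℕ) (hn : 1 ≤ n) (a x φ : ℝ) :
    ∏ l ∈ Finset.range n,
      (a ^ 2 - 2 * a * x * Real.cos ((φ + 2 * π * l) / n) + x ^ 2) =
    a ^ (2 * n) - 2 * a ^ n * x ^ n * Real.cos φ + x ^ (2 * n) := by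
  have hn0 : 0 < n := hn
  apply Complex.ofReal_injective
  push_cast
  have factor : ∀ θ : ℝ, ((a : ℂ) ^ 2 - 2 * a * x * Complex.cos θ + x ^ 2) =
      ((a : ℂ) - x * Complex.exp ((θ : ℂ) * Complex.I)) *
        (starRingEnd ℂ ((a : ℂ) - x * Complex.exp ((θ : ℂ) * Complex.I))) := by
    intro θ
    rw [Complex.cos]
    simp only [map_sub, map_mul, Complex.conj_ofReal, ← Complex.exp_conj, map_mul,
      Complex.conj_I, Complex.conj_ofReal]
    ring_nf
    rw [mul_assoc ((x:ℂ)^2), ← Complex.exp_add, add_neg_cancel, Complex.exp_zero, mul_one]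
  calc ∏ l ∈ Finset.range n,
        ((a : ℂ) ^ 2 - 2 * a * x * Complex.cos (((φ : ℂ) + 2 * π * l) / n) + x ^ 2)
      = (∏ l ∈ Finset.range n,
          ((a : ℂ) - x * Complex.exp ((((φ + 2 * π * l) / n : ℝ) : ℂ) * Complex.I))) *
        starRingEnd ℂ (∏ l ∈ Finset.range n,
          ((a : ℂ) - x * Complex.exp ((((φ + 2 * π * l) / n : ℝ) : ℂ) * Complex.I))) := by
        rw [map_prod, ← Finset.prod_mul_distrib]
        refine Finset.prod_congr rfl fun l _ => ?_
        rw [show ((φ : ℂ) + 2 * π * l) / n = (((φ + 2 * π * l) / n : ℝ) : ℂ) by push_cast; ring]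
        exact factor ((φ + 2 * π * l) / n)
    _ = ((a : ℂ) ^ n - x ^ n * Complex.exp ((φ : ℂ) * Complex.I)) *
        starRingEnd ℂ ((a : ℂ) ^ n - x ^ n * Complex.exp ((φ : ℂ) * Complex.I)) := by
        rw [key_prod n hn0 a x φ]
    _ = (a : ℂ) ^ (2 * n) - 2 * a ^ n * x ^ n * Complex.cos φ + x ^ (2 * n) := by
        simp only [map_sub, map_mul, map_pow, Complex.conj_ofReal, ← Complex.exp_conj,
          map_mul, Complex.conj_I, Complex.conj_ofReal, Complex.cos]
        rw [two_mul, pow_add]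
        ring_nf
        rw [mul_assoc ((x:ℂ)^(n*2)), ← Complex.exp_add, add_neg_cancel,
          Complex.exp_zero, mul_one]
end

section
/- For every natural number n ≥ 1 and every real φ such that φ + πl/n is not an integer multiple of π for any l = 0,...,n-1, one has ∑_{l=0}^{n-1} cot(φ + πl/n) = n·cot(nφ). -/
open Real Finset

/-!
Put `z = exp (2 i φ)` and `ζ = exp (2 π i / n)`. Since `cot x = i (1 - 2 / (1 - exp (2 i x)))`,
the identity reduces to `∑ l < n, 1 / (1 - z ζ^l) = n / (1 - z^n)`, which is the logarithmic
derivative of `X^n - 1 = ∏ l < n, (X - ζ^l)` evaluated at `z⁻¹`.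
-/

namespace IsPrimitiveRoot

variable {K : Type*} [Field K] {n : ℕ} {ζ : K}

open Polynomial in
theorem sum_one_div_sub_pow (hζ : IsPrimitiveRoot ζ n) {w : K} (hw : w ^ n ≠ 1) :
    ∑ l ∈ range n, 1 / (w - ζ ^ l) = n * w ^ (n - 1) / (w ^ n - 1) := by
  have hroots : (X ^ n - C 1 : K[X]).roots = (Multiset.range n).map (ζ ^ ·) := by
    simpa [nthRoots] using hζ.nthRoots_eq (one_pow n)
  have := (X_pow_sub_one_splits hζ).eval_derivative_div_eval_of_ne_zero
    (x := w) (by simpa [sub_eq_zero] using hw)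
  rw [hroots] at this
  simpa [Finset.sum, derivative_X_pow] using this.symm

theorem sum_one_div_one_sub_mul_pow (hζ : IsPrimitiveRoot ζ n) {z : K} (hz : z ^ n ≠ 1) :
    ∑ l ∈ range n, 1 / (1 - z * ζ ^ l) = n / (1 - z ^ n) := by
  obtain ⟨m, rfl⟩ : ∃ m, n = m + 1 := Nat.exists_eq_succ_of_ne_zero (by rintro rfl; simp at hz)
  rcases eq_or_ne z 0 with rfl | hz0
  · simp
  have hterm (l : ℕ) : 1 / (1 - z * ζ ^ l) = z⁻¹ * (1 / (z⁻¹ - ζ ^ l)) := by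
    rw [show z⁻¹ - ζ ^ l = z⁻¹ * (1 - z * ζ ^ l) by field_simp, mul_one_div,
      div_mul_cancel_left₀ (inv_ne_zero hz0), one_div]
  have hw : z⁻¹ ^ (m + 1) ≠ 1 := by rwa [inv_pow, Ne, inv_eq_one]
  rw [sum_congr rfl fun l _ => hterm l, ← mul_sum, hζ.sum_one_div_sub_pow hw]
  have : 1 - z ^ (m + 1) ≠ 0 := sub_ne_zero.2 hz.symm
  rw [Nat.add_sub_cancel, inv_pow, inv_pow]
  field_simp
  ring

theorem exists_mul_pow_eq_one [NeZero n] (hζ : IsPrimitiveRoot ζ n) {z : K} (hz : z ^ n = 1) :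
    ∃ l < n, z * ζ ^ l = 1 := by
  obtain ⟨l, hl, hζl⟩ := hζ.eq_pow_of_pow_eq_one (ξ := z⁻¹) (by rw [inv_pow, hz, inv_one])
  refine ⟨l, hl, ?_⟩
  rw [hζl, mul_inv_cancel₀]
  rintro rfl
  simp [NeZero.ne n] at hz

end IsPrimitiveRoot

namespace Complex

theorem exp_two_mul_I_mul_eq_one_iff (x : ℂ) : exp (2 * I * x) = 1 ↔ ∃ k : ℤ, x = k * π := by
  rw [exp_eq_one_iff]
  refine exists_congr fun k => ⟨fun h => ?_, fun h => ?_⟩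
  · linear_combination (-I / 2) * h + (x - k * π) * I_sq
  · rw [h]; ring

theorem cot_eq_I_mul_one_sub_two_div {x : ℂ} (hx : exp (2 * I * x) ≠ 1) :
    cot x = I * (1 - 2 / (1 - exp (2 * I * x))) := by
  have : 1 - exp (2 * I * x) ≠ 0 := sub_ne_zero.2 hx.symm
  rw [cot_eq_exp_ratio]
  field_simp
  linear_combination (1 + exp (2 * I * x)) * I_sq

theorem sum_cot_add_pi_mul_div {n : ℕ} (hn : n ≠ 0) {x : ℂ}
    (h : ∀ l < n, ∀ k : ℤ, x + π * l / n ≠ k * π) :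
    ∑ l ∈ range n, cot (x + π * l / n) = n * cot (n * x) := by
  have : NeZero n := ⟨hn⟩
  set z := exp (2 * I * x)
  set ζ := exp (2 * π * I / n)
  have hζ : IsPrimitiveRoot ζ n := isPrimitiveRoot_exp n hn
  have hshift (l : ℕ) : exp (2 * I * (x + π * l / n)) = z * ζ ^ l := by
    rw [← exp_nat_mul, ← exp_add]
    congr 1
    field_simp
  have hzn : exp (2 * I * (n * x)) = z ^ n := by
    rw [← exp_nat_mul]
    ring_nf
  have hne (l : ℕ) (hl : l < n) : z * ζ ^ l ≠ 1 := by
    rw [← hshift, Ne, exp_two_mul_I_mul_eq_one_iff, not_exists]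
    exact h l hl
  have hzn1 : z ^ n ≠ 1 := fun h1 =>
    let ⟨l, hl, hl1⟩ := hζ.exists_mul_pow_eq_one h1
    hne l hl hl1
  calc ∑ l ∈ range n, cot (x + π * l / n)
      = ∑ l ∈ range n, I * (1 - 2 * (1 / (1 - z * ζ ^ l))) := by
        refine sum_congr rfl fun l hl => ?_
        rw [cot_eq_I_mul_one_sub_two_div (hshift l ▸ hne l (mem_range.1 hl)), hshift, mul_one_div]
    _ = I * (n - 2 * (n / (1 - z ^ n))) := by
        rw [← mul_sum, sum_sub_distrib, ← mul_sum, hζ.sum_one_div_one_sub_mul_pow hzn1]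
        simp only [sum_const, card_range, nsmul_eq_mul, mul_one]
    _ = n * cot (n * x) := by
        rw [cot_eq_I_mul_one_sub_two_div (hzn ▸ hzn1), hzn]
        ring

end Complex

theorem cot_sum (n : ℕ) (hn : 1 ≤ n) (φ : ℝ)
    (h : ∀ l < n, ∀ k : ℤ, φ + π * l / n ≠ k * π) :
    ∑ l ∈ Finset.range n, Real.cot (φ + π * l / n) = n * Real.cot (n * φ) := by
  apply Complex.ofReal_injective
  push_cast [Complex.ofReal_cot]
  refine Complex.sum_cot_add_pi_mul_div (by omega) fun l hl k hk => h l hl k ?_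
  exact_mod_cast hk
end

section
/- For every natural number n ≥ 1 and every real φ such that nφ is not an integer multiple of π, one has ∑_{l=0}^{n-1} cot²(φ + πl/n) = n²·csc²(nφ) − n. -/
open Real Finset

/-!
Writing `w = exp (2 θ i)`, one has `csc² θ = -4 w / (w - 1)²`, and the angles `φ + π l / n`
correspond to `w ζ^l` with `ζ` a primitive `n`-th root of unity. Expanding
`1 / (a - 1) = (1 + a + ⋯ + a^(n-1)) / (aⁿ - 1)` and using that `∑ₗ ζ^(l m)` vanishes unless
`n ∣ m` gives `∑ₗ w ζ^l / (w ζ^l - 1)² = n² wⁿ / (wⁿ - 1)²`, that is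
`∑ₗ csc² (φ + π l / n) = n² csc² (n φ)`. Then subtract `n` using `cot² = csc² - 1`.
-/

section PowerSums

variable {K : Type*} [Field K] {n : ℕ}

theorem IsPrimitiveRoot.geom_sum_pow_eq_ite {ζ : K} (hζ : IsPrimitiveRoot ζ n) (m : ℕ) :
    ∑ l ∈ range n, (ζ ^ m) ^ l = if n ∣ m then (n : K) else 0 := by
  split_ifs with hm
  · simp [(hζ.pow_eq_one_iff_dvd m).2 hm]
  · rw [geom_sum_eq ((hζ.pow_eq_one_iff_dvd m).not.2 hm), ← pow_mul, mul_comm, pow_mul,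
      hζ.pow_eq_one, one_pow, sub_self, zero_div]

theorem div_sub_one_sq_eq_sum_sum_pow {a : K} (ha : a ^ n ≠ 1) :
    a / (a - 1) ^ 2 =
      (∑ j ∈ range n, ∑ k ∈ range n, a ^ (j + k + 1)) / (a ^ n - 1) ^ 2 := by
  have hgeom : (∑ k ∈ range n, a ^ k) * (a - 1) = a ^ n - 1 := geom_sum_mul a n
  have hne : (∑ k ∈ range n, a ^ k) * (a - 1) ≠ 0 := hgeom ▸ sub_ne_zero.2 ha
  have hsq : ∑ j ∈ range n, ∑ k ∈ range n, a ^ (j + k + 1) =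
      a * (∑ k ∈ range n, a ^ k) ^ 2 := by
    rw [sq, sum_mul_sum, mul_sum]
    exact sum_congr rfl fun j _ => by rw [mul_sum]; exact sum_congr rfl fun k _ => by ring
  rw [hsq, ← hgeom]
  field_simp [left_ne_zero_of_mul hne, right_ne_zero_of_mul hne]

theorem IsPrimitiveRoot.sum_mul_pow_div_sub_one_sq {ζ : K} (hζ : IsPrimitiveRoot ζ n) {w : K}
    (hw : w ^ n ≠ 1) :
    ∑ l ∈ range n, w * ζ ^ l / (w * ζ ^ l - 1) ^ 2 = n ^ 2 * w ^ n / (w ^ n - 1) ^ 2 := by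
  have hpow (l : ℕ) : (w * ζ ^ l) ^ n = w ^ n := by
    rw [mul_pow, ← pow_mul, mul_comm l, pow_mul, hζ.pow_eq_one, one_pow, mul_one]
  simp_rw [div_sub_one_sq_eq_sum_sum_pow (n := n) ((hpow _).symm ▸ hw), hpow]
  rw [← sum_div]
  congr 1
  calc ∑ l ∈ range n, ∑ j ∈ range n, ∑ k ∈ range n, (w * ζ ^ l) ^ (j + k + 1)
      = ∑ j ∈ range n, ∑ k ∈ range n,
          w ^ (j + k + 1) * if n ∣ j + k + 1 then (n : K) else 0 := by
        rw [sum_comm]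
        refine sum_congr rfl fun j _ => ?_
        rw [sum_comm]
        refine sum_congr rfl fun k _ => ?_
        simp only [← hζ.geom_sum_pow_eq_ite, mul_sum, mul_pow, ← pow_mul, mul_comm]
    _ = ∑ j ∈ range n, ∑ k ∈ range n, if k = n - 1 - j then (n : K) * w ^ n else 0 := by
        refine sum_congr rfl fun j hj => sum_congr rfl fun k hk => ?_
        rw [mem_range] at hj hk
        by_cases hjk : j + k + 1 = n
        · rw [if_pos (hjk ▸ dvd_refl n), if_pos (by omega), hjk, mul_comm]
        · have hndvd : ¬ n ∣ j + k + 1 := fun hd =>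
            hjk (Nat.eq_of_dvd_of_lt_two_mul (by omega) hd (by omega))
          rw [if_neg hndvd, if_neg (by omega), mul_zero]
    _ = n ^ 2 * w ^ n := by
        rw [sum_congr rfl fun j hj => by rw [sum_ite_eq', if_pos (by simp at hj ⊢; omega)]]
        simp [sq, mul_assoc]

end PowerSums

namespace Complex

theorem sin_sq_mul_four_mul_exp (θ : ℂ) :
    sin θ ^ 2 * (4 * exp (2 * θ * I)) = -(exp (2 * θ * I) - 1) ^ 2 := by
  have h2 : exp (2 * θ * I) = exp (θ * I) ^ 2 := by rw [← exp_nat_mul]; ring_nf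
  have hneg : exp (-θ * I) = (exp (θ * I))⁻¹ := by rw [← exp_neg]; ring_nf
  rw [sin, h2, hneg]
  field_simp
  ring_nf
  rw [I_sq]
  ring

theorem inv_sin_sq (θ : ℂ) :
    (sin θ)⁻¹ ^ 2 = -4 * exp (2 * θ * I) / (exp (2 * θ * I) - 1) ^ 2 := by
  have h4 : 4 * exp (2 * θ * I) ≠ 0 := mul_ne_zero (by norm_num) (exp_ne_zero _)
  rw [inv_pow, eq_div_of_mul_eq h4 (sin_sq_mul_four_mul_exp θ), inv_div, div_neg, neg_mul,
    neg_div]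

theorem exp_two_mul_I_ne_one_of_sin_ne_zero {θ : ℂ} (h : sin θ ≠ 0) :
    exp (2 * θ * I) ≠ 1 := by
  intro h1
  have := sin_sq_mul_four_mul_exp θ
  simp_all

end Complex

namespace Real

theorem cot_sq_eq_inv_sin_sq_sub_one {x : ℝ} (hx : sin x ≠ 0) :
    cot x ^ 2 = (sin x)⁻¹ ^ 2 - 1 := by
  rw [cot_eq_cos_div_sin, div_pow, cos_sq']
  field_simp

theorem sum_inv_sin_sq_add_pi_mul_div {n : ℕ} {φ : ℝ} (h : sin (n * φ) ≠ 0) :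
    ∑ l ∈ range n, (sin (φ + π * l / n))⁻¹ ^ 2 = n ^ 2 * (sin (n * φ))⁻¹ ^ 2 := by
  have hn : n ≠ 0 := by rintro rfl; simp at h
  set w := Complex.exp (2 * φ * Complex.I)
  have hshift (l : ℕ) : Complex.exp (2 * (φ + π * l / n) * Complex.I)
      = w * Complex.exp (2 * π * Complex.I / n) ^ l := by
    rw [← Complex.exp_nat_mul, ← Complex.exp_add]
    congr 1
    field_simp
  have hmul : Complex.exp (2 * (n * φ) * Complex.I) = w ^ n := by
    rw [← Complex.exp_nat_mul]
    ring_nf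
  have hw : w ^ n ≠ 1 :=
    hmul ▸ Complex.exp_two_mul_I_ne_one_of_sin_ne_zero (by exact_mod_cast h)
  apply Complex.ofReal_injective
  push_cast
  simp_rw [Complex.inv_sin_sq, hshift, hmul]
  rw [sum_congr rfl fun l _ => mul_div_assoc (-4) _ _, ← mul_sum,
    (Complex.isPrimitiveRoot_exp n hn).sum_mul_pow_div_sub_one_sq hw]
  ring

end Real

theorem cot_sq_sum_general (n : ℕ) (φ : ℝ)
    (h : ∀ k : ℤ, (n : ℝ) * φ ≠ k * π) :
    ∑ l ∈ Finset.range n, Real.cot (φ + π * l / n) ^ 2 =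
      (n : ℝ) ^ 2 * (Real.sin (n * φ))⁻¹ ^ 2 - n := by
  have hn : (n : ℝ) ≠ 0 := fun h0 => h 0 (by simp [h0])
  have hsin (l : ℕ) : sin (φ + π * l / n) ≠ 0 := sin_ne_zero_iff.2 fun k hk =>
    h (n * k - l) (by rw [show φ = k * π - π * l / n by linarith]; push_cast; field_simp)
  rw [sum_congr rfl fun l _ => cot_sq_eq_inv_sin_sq_sub_one (hsin l), sum_sub_distrib,
    sum_inv_sin_sq_add_pi_mul_div (sin_ne_zero_iff.2 fun k hk => h k hk.symm)]
  simp

theorem cot_sq_sum (n : ℕ) (hn : 1 ≤ n) (φ : ℝ)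
    (h : ∀ k : ℤ, (n : ℝ) * φ ≠ k * π) :
    ∑ l ∈ Finset.range n, Real.cot (φ + π * l / n) ^ 2 =
      (n : ℝ) ^ 2 * (Real.sin (n * φ))⁻¹ ^ 2 - n :=
  cot_sq_sum_general n φ h
end

section
/- For every odd natural number n ≥ 3, ∑_{l=1}^{n-1} tan²(πl/n) = n(n−1). -/
/-!
With `z = e^{2iθ}` one has `z + 1 = 2 cos θ e^{iθ}`, hence `tan² θ = 4z/(z+1)² - 1`.
For `θ = πl/n` the number `z = ζ^l` runs over the `n`-th roots of unity, and since `n` is odd,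
`(-z)^n = -1` turns the geometric series into `2/(z+1) = ∑_{k<n} (-z)^k`. So
`∑_z 4z/(z+1)² = ∑_z ∑_{j,k<n} (-1)^{j+k} z^{j+k+1}`, and orthogonality of the powers of `ζ`
keeps only the `n` pairs with `j + k + 1 = n`, each contributing `(-1)^{n-1} n = n`.
The term `l = 0` vanishes, so the sum is `n² - n`.
-/

open Real Finset

theorem Complex.exp_two_mul_I_add_one (x : ℂ) :
    Complex.exp (2 * x * Complex.I) + 1 = 2 * Complex.cos x * Complex.exp (x * Complex.I) := by
  rw [Complex.two_cos, add_mul, ← Complex.exp_add, ← Complex.exp_add]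
  ring_nf
  simp [add_comm]

theorem Complex.tan_sq_eq_of_exp (x : ℂ) (hx : Complex.exp (2 * x * Complex.I) + 1 ≠ 0) :
    Complex.tan x ^ 2 =
      4 * Complex.exp (2 * x * Complex.I) / (Complex.exp (2 * x * Complex.I) + 1) ^ 2 - 1 := by
  have hcos : Complex.cos x ≠ 0 := by
    rw [Complex.exp_two_mul_I_add_one] at hx
    exact right_ne_zero_of_mul (left_ne_zero_of_mul hx)
  have hexp : Complex.exp (2 * x * Complex.I) = Complex.exp (x * Complex.I) ^ 2 := by
    rw [← Complex.exp_nat_mul]; ring_nf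
  rw [Complex.exp_two_mul_I_add_one, hexp, Complex.tan_eq_sin_div_cos]
  field_simp
  linear_combination 4 * Complex.sin_sq_add_cos_sq x

section CommRing

variable {R : Type*} [CommRing R]

theorem add_one_mul_geom_sum_neg {n : ℕ} (hn : Odd n) {w : R} (hw : w ^ n = 1) :
    (w + 1) * ∑ k ∈ range n, (-w) ^ k = 2 := by
  have := geom_sum_mul (-w) n
  rw [hn.neg_pow, hw] at this
  linear_combination -this

theorem add_one_ne_zero_of_pow_eq_one {n : ℕ} (hn : Odd n) (h2 : (2 : R) ≠ 0) {w : R}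
    (hw : w ^ n = 1) : w + 1 ≠ 0 :=
  left_ne_zero_of_mul (add_one_mul_geom_sum_neg hn hw ▸ h2)

theorem mul_geom_sum_neg_sq (n : ℕ) (w : R) :
    w * (∑ k ∈ range n, (-w) ^ k) ^ 2 =
      ∑ j ∈ range n, ∑ k ∈ range n, (-1) ^ (j + k) * w ^ (j + k + 1) := by
  simp_rw [sq, sum_mul_sum, mul_sum, neg_pow w, pow_add]
  exact sum_congr rfl fun j _ => sum_congr rfl fun k _ => by ring

end CommRing

section Field

variable {K : Type*} [Field K]

theorem four_mul_div_add_one_sq_eq {n : ℕ} (hn : Odd n) (h2 : (2 : K) ≠ 0) {w : K}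
    (hw : w ^ n = 1) : 4 * w / (w + 1) ^ 2 = w * (∑ k ∈ range n, (-w) ^ k) ^ 2 := by
  have hw1 := add_one_ne_zero_of_pow_eq_one hn h2 hw
  field_simp
  linear_combination (-(w * (w + 1) * ∑ k ∈ range n, (-w) ^ k) - 2 * w) *
    add_one_mul_geom_sum_neg hn hw

theorem IsPrimitiveRoot.sum_pow_pow_eq_ite {ζ : K} {n : ℕ} (hζ : IsPrimitiveRoot ζ n) (m : ℕ) :
    ∑ l ∈ range n, (ζ ^ l) ^ m = if n ∣ m then (n : K) else 0 := by
  simp_rw [pow_right_comm ζ]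
  split_ifs with h
  · simp [(hζ.pow_eq_one_iff_dvd m).mpr h]
  · rw [geom_sum_eq (mt (hζ.pow_eq_one_iff_dvd m).mp h), pow_right_comm, hζ.pow_eq_one,
      one_pow, sub_self, zero_div]

theorem IsPrimitiveRoot.sum_pow_mul_geom_sum_neg_sq {ζ : K} {n : ℕ} (hζ : IsPrimitiveRoot ζ n)
    (hn : Odd n) :
    ∑ l ∈ range n, ζ ^ l * (∑ k ∈ range n, (-ζ ^ l) ^ k) ^ 2 = (n : K) ^ 2 := by
  calc ∑ l ∈ range n, ζ ^ l * (∑ k ∈ range n, (-ζ ^ l) ^ k) ^ 2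
      = ∑ j ∈ range n, ∑ k ∈ range n,
          (-1) ^ (j + k) * ∑ l ∈ range n, (ζ ^ l) ^ (j + k + 1) := by
        simp_rw [mul_geom_sum_neg_sq, mul_sum]
        rw [sum_comm]
        exact sum_congr rfl fun j _ => sum_comm
    _ = ∑ j ∈ range n, (n : K) := by
        refine sum_congr rfl fun j hj => ?_
        rw [mem_range] at hj
        rw [sum_eq_single_of_mem (n - 1 - j) (by simp; omega)]
        · rw [hζ.sum_pow_pow_eq_ite, if_pos ⟨1, by omega⟩, show j + (n - 1 - j) = n - 1 by omega,
            (Nat.Odd.sub_odd hn odd_one).neg_one_pow, one_mul]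
        · intro k hk hkj
          rw [mem_range] at hk
          rw [hζ.sum_pow_pow_eq_ite, if_neg, mul_zero]
          intro hdvd
          have := Nat.eq_of_dvd_of_lt_two_mul (by omega) hdvd (by omega)
          omega
    _ = (n : K) ^ 2 := by simp [sq]

end Field

theorem tan_sq_sum_general (n : ℕ) (hodd : Odd n) :
    ∑ l ∈ Finset.Ico 1 n, Real.tan (π * l / n) ^ 2 = (n : ℝ) * (n - 1) := by
  set ζ := Complex.exp (2 * π * Complex.I / n)
  have hζ : IsPrimitiveRoot ζ n := Complex.isPrimitiveRoot_exp n hodd.pos.ne'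
  have hterm (l : ℕ) :
      ((tan (π * l / n) ^ 2 : ℝ) : ℂ) = ζ ^ l * (∑ k ∈ range n, (-ζ ^ l) ^ k) ^ 2 - 1 := by
    have hexp : Complex.exp (2 * ↑(π * l / n) * Complex.I) = ζ ^ l := by
      rw [← Complex.exp_nat_mul]; push_cast; ring_nf
    have hw : (ζ ^ l) ^ n = 1 := by rw [pow_right_comm, hζ.pow_eq_one, one_pow]
    have hw1 : Complex.exp (2 * ↑(π * l / n) * Complex.I) + 1 ≠ 0 :=
      hexp ▸ add_one_ne_zero_of_pow_eq_one hodd two_ne_zero hw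
    rw [Complex.ofReal_pow, Complex.ofReal_tan, Complex.tan_sq_eq_of_exp _ hw1, hexp,
      four_mul_div_add_one_sq_eq hodd two_ne_zero hw]
  have hrange : ∑ l ∈ range n, tan (π * l / n) ^ 2 = ∑ l ∈ Ico 1 n, tan (π * l / n) ^ 2 := by
    rw [range_eq_Ico, sum_eq_sum_Ico_succ_bot hodd.pos]
    simp
  apply Complex.ofReal_injective
  rw [← hrange, Complex.ofReal_sum, sum_congr rfl fun l _ => hterm l, sum_sub_distrib,
    hζ.sum_pow_mul_geom_sum_neg_sq hodd, sum_const, card_range, nsmul_one]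
  push_cast
  ring

theorem tan_sq_sum (n : ℕ) (hn : 3 ≤ n) (hodd : Odd n) :
    ∑ l ∈ Finset.Ico 1 n, Real.tan (π * l / n) ^ 2 = (n : ℝ) * (n - 1) :=
  tan_sq_sum_general n hodd
end

section
/- For every natural number n ≥ 2 and every integer k with 1 ≤ k ≤ n−1, ∑_{l=1}^{n-1} cot(πl/n)·sin(2πlk/n) = n − 2k. -/
/-!
Telescoping `sin θ · (cos 2jθ + cos 2(j+1)θ) = cos θ · (sin 2(j+1)θ - sin 2jθ)`
gives `cot θ · sin 2kθ = ∑_{j<k} (cos 2jθ + cos 2(j+1)θ)`. At `θ = πl/n`, summing over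
`1 ≤ l < n` turns each `cos 2jθ` into `-1` for `0 < j < n` (the powers of the `n`-th root
of unity `e^{2πij/n}` sum to zero), and into `n - 1` for `j = 0`; hence the total
`n - 2 - 2(k - 1)`.
-/

open Real Finset

theorem IsPrimitiveRoot.geom_sum_pow_eq_zero {R : Type*} [CommRing R] [IsDomain R] {ζ : R}
    {n j : ℕ} (hζ : IsPrimitiveRoot ζ n) (hj : ¬ n ∣ j) :
    ∑ l ∈ range n, (ζ ^ j) ^ l = 0 := by
  have hne : ζ ^ j - 1 ≠ 0 :=
    sub_ne_zero.mpr fun h => hj (hζ.pow_eq_one_iff_dvd j |>.mp h)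
  have hpow : (ζ ^ j) ^ n = 1 := by rw [← pow_mul, mul_comm, pow_mul, hζ.pow_eq_one, one_pow]
  simpa [hpow, hne] using geom_sum_mul (ζ ^ j) n

theorem sum_range_cos_two_pi_mul_div_eq_zero {n j : ℕ} (hj : ¬ n ∣ j) :
    ∑ l ∈ range n, cos (2 * π * j * l / n) = 0 := by
  rcases Nat.eq_zero_or_pos n with rfl | hn
  · simp
  have hζ := Complex.isPrimitiveRoot_exp n hn.ne'
  have hterm : ∀ l : ℕ,
      cos (2 * π * j * l / n) = ((Complex.exp (2 * π * Complex.I / n) ^ j) ^ l).re := by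
    intro l
    rw [← pow_mul, ← Complex.exp_nat_mul, ← Complex.exp_ofReal_mul_I_re]
    congr 2
    push_cast
    ring
  simp_rw [hterm, ← Complex.re_sum, hζ.geom_sum_pow_eq_zero hj, Complex.zero_re]

theorem sum_Ico_cos_two_pi_mul_div {n j : ℕ} (hjn : j < n) :
    ∑ l ∈ Ico 1 n, cos (2 * π * j * l / n) = (if j = 0 then (n : ℝ) else 0) - 1 := by
  have hsplit :=
    sum_eq_sum_Ico_succ_bot (show 0 < n by omega) fun l : ℕ => cos (2 * π * j * l / n)
  rw [← range_eq_Ico] at hsplit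
  split_ifs with hj
  · simp [hj, Nat.cast_sub (show 1 ≤ n by omega)]
  · rw [sum_range_cos_two_pi_mul_div_eq_zero fun h => hj (Nat.eq_zero_of_dvd_of_lt h hjn),
      Nat.cast_zero, mul_zero, zero_div, cos_zero] at hsplit
    linarith

theorem sin_mul_sum_range_cos_add_cos (θ : ℝ) (k : ℕ) :
    sin θ * ∑ j ∈ range k, (cos (2 * j * θ) + cos (2 * (j + 1) * θ)) =
      cos θ * sin (2 * k * θ) := by
  induction k with
  | zero => simp
  | succ k ih =>
    have hcos := cos_add_cos (2 * (k + 1) * θ) (2 * k * θ)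
    have hsin := sin_sub_sin (2 * (k + 1) * θ) (2 * k * θ)
    have hmid : (2 * (k + 1) * θ + 2 * k * θ) / 2 = (2 * k + 1) * θ := by ring
    have hhalf : (2 * (k + 1) * θ - 2 * k * θ) / 2 = θ := by ring
    rw [hmid, hhalf] at hcos hsin
    rw [sum_range_succ, mul_add, ih]
    push_cast
    linear_combination sin θ * hcos - cos θ * hsin

theorem cot_mul_sin_two_mul_nat_mul {θ : ℝ} (hθ : sin θ ≠ 0) (k : ℕ) :
    cot θ * sin (2 * k * θ) = ∑ j ∈ range k, (cos (2 * j * θ) + cos (2 * (j + 1) * θ)) := by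
  rw [cot_eq_cos_div_sin, div_mul_eq_mul_div, div_eq_iff hθ, mul_comm _ (sin θ),
    sin_mul_sum_range_cos_add_cos]

theorem sin_pi_mul_div_ne_zero {l n : ℕ} (hl : 0 < l) (hln : l < n) : sin (π * l / n) ≠ 0 := by
  have hl0 : (0 : ℝ) < l := by exact_mod_cast hl
  have hln' : (l : ℝ) < n := by exact_mod_cast hln
  refine (sin_pos_of_pos_of_lt_pi (div_pos (mul_pos pi_pos hl0) (hl0.trans hln')) ?_).ne'
  rwa [div_lt_iff₀ (hl0.trans hln'), mul_lt_mul_iff_right₀ pi_pos]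

theorem eisenstein_sum_general (n k : ℕ) (hk1 : 1 ≤ k) (hk2 : k ≤ n - 1) :
    ∑ l ∈ Finset.Ico 1 n, Real.cot (π * l / n) * Real.sin (2 * π * l * k / n) =
      (n : ℝ) - 2 * k := by
  calc ∑ l ∈ Ico 1 n, cot (π * l / n) * sin (2 * π * l * k / n)
      = ∑ l ∈ Ico 1 n, ∑ j ∈ range k,
          (cos (2 * π * j * l / n) + cos (2 * π * (j + 1 : ℕ) * l / n)) := by
        refine sum_congr rfl fun l hl => ?_
        obtain ⟨hl0, hln⟩ := mem_Ico.mp hl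
        rw [show 2 * π * l * k / n = 2 * k * (π * l / n) by ring,
          cot_mul_sin_two_mul_nat_mul (sin_pi_mul_div_ne_zero hl0 hln)]
        refine sum_congr rfl fun j _ => ?_
        push_cast
        ring_nf
    _ = ∑ j ∈ range k, ((if j = 0 then (n : ℝ) else 0) - 2) := by
        rw [sum_comm]
        refine sum_congr rfl fun j hj => ?_
        rw [mem_range] at hj
        rw [sum_add_distrib, sum_Ico_cos_two_pi_mul_div (by omega),
          sum_Ico_cos_two_pi_mul_div (by omega)]
        simp only [Nat.add_one_ne_zero, if_false]
        ring
    _ = n - 2 * k := by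
        rw [sum_sub_distrib, sum_ite_eq' (range k) 0, if_pos (mem_range.mpr hk1)]
        simp [mul_comm]

theorem eisenstein_sum (n k : ℕ) (hn : 2 ≤ n) (hk1 : 1 ≤ k) (hk2 : k ≤ n - 1) :
    ∑ l ∈ Finset.Ico 1 n, Real.cot (π * l / n) * Real.sin (2 * π * l * k / n) =
      (n : ℝ) - 2 * k :=
  eisenstein_sum_general n k hk1 hk2
end

section
/- For every natural number n ≥ 1 and integer k with 0 ≤ k ≤ 2n−1, ∑_{l=0}^{n-1} sec(πl/(2n))·cos((2k+1)lπ/(2n)) = (−1)^k·(n − 2·⌊(k+1)/2⌋). -/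
/-!
Write `S k` for the sum with `θ_l = π l / (2n)`. Since
`cos ((2k+3)θ) + cos ((2k+1)θ) = 2 cos θ cos ((2k+2)θ)`, the secant cancels in `S (k+1) + S k`,
leaving `2 ∑_{l<n} cos ((k+1) l π / n)`, which a sine telescope evaluates to `1 + (-1)^k`
as long as `k + 1 < 2n`. Together with `S 0 = n` this recurrence determines `S k`, and the
right-hand side satisfies the same recurrence.
-/

open Real Finset

theorem two_mul_sin_half_mul_sum_range_cos (x : ℝ) (n : ℕ) :
    2 * sin (x / 2) * ∑ l ∈ range n, cos (l * x) = sin ((2 * n - 1) * x / 2) + sin (x / 2) := by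
  induction n with
  | zero => simp [neg_div, sin_neg]
  | succ n ih =>
    rw [sum_range_succ, mul_add, ih, two_mul_sin_mul_cos,
      show x / 2 - n * x = -((2 * n - 1) * x / 2) by ring, sin_neg]
    push_cast
    ring_nf

theorem sum_range_cos_mul_nat_mul_pi_div {n m : ℕ} (hm₀ : 0 < m) (hm : m < 2 * n) :
    ∑ l ∈ range n, cos (l * (m * π / n)) = (1 - (-1) ^ m) / 2 := by
  have hn : (0 : ℝ) < n := by exact_mod_cast (show 0 < n by omega)
  have hsin : 0 < sin (m * π / n / 2) := by
    apply sin_pos_of_pos_of_lt_pi (by positivity)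
    rw [div_div, div_lt_iff₀ (by positivity)]
    have : (m : ℝ) < 2 * n := by exact_mod_cast hm
    nlinarith [pi_pos]
  have htelescope := two_mul_sin_half_mul_sum_range_cos (m * π / n) n
  rw [show (2 * n - 1) * (m * π / n) / 2 = m * π - m * π / n / 2 by field_simp,
    sin_nat_mul_pi_sub] at htelescope
  apply mul_left_cancel₀ (mul_ne_zero two_ne_zero hsin.ne')
  rw [htelescope]
  ring

theorem cos_pi_mul_div_two_mul_pos {n l : ℕ} (hl : l < n) : 0 < cos (π * l / (2 * n)) := by
  have hn : (0 : ℝ) < n := by exact_mod_cast (show 0 < n by omega)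
  apply cos_pos_of_mem_Ioo ⟨by linarith [show 0 ≤ π * l / (2 * n) by positivity, pi_pos], ?_⟩
  rw [div_lt_iff₀ (by positivity)]
  have : (l : ℝ) < n := by exact_mod_cast hl
  nlinarith [pi_pos]

noncomputable def secCosSum (n k : ℕ) : ℝ :=
  ∑ l ∈ range n, (cos (π * l / (2 * n)))⁻¹ * cos ((2 * k + 1) * l * π / (2 * n))

theorem secCosSum_zero (n : ℕ) : secCosSum n 0 = n := by
  calc secCosSum n 0 = ∑ _l ∈ range n, (1 : ℝ) := sum_congr rfl fun l hl => by
        rw [Nat.cast_zero, mul_zero, zero_add, one_mul, mul_comm (l : ℝ),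
          inv_mul_cancel₀ (cos_pi_mul_div_two_mul_pos (mem_range.mp hl)).ne']
    _ = n := by simp

theorem secCosSum_succ_add {n k : ℕ} (hk : k + 1 < 2 * n) :
    secCosSum n (k + 1) + secCosSum n k = 1 + (-1) ^ k := by
  have hpair : ∀ l ∈ range n,
      (cos (π * l / (2 * n)))⁻¹ * cos ((2 * (k + 1 : ℕ) + 1) * l * π / (2 * n)) +
        (cos (π * l / (2 * n)))⁻¹ * cos ((2 * k + 1) * l * π / (2 * n)) =
      2 * cos (l * ((k + 1 : ℕ) * π / n)) := by
    intro l hl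
    have hcos := (cos_pi_mul_div_two_mul_pos (mem_range.mp hl)).ne'
    rw [← mul_add, cos_add_cos]
    field_simp
    push_cast
    ring_nf
  rw [secCosSum, secCosSum, ← sum_add_distrib, sum_congr rfl hpair, ← mul_sum,
    sum_range_cos_mul_nat_mul_pi_div k.succ_pos hk, pow_succ]
  ring

theorem neg_one_pow_mul_sub_two_mul_half_succ_add (n k : ℕ) :
    (-1 : ℝ) ^ (k + 1) * (n - 2 * ((k + 2) / 2 : ℕ)) + (-1) ^ k * (n - 2 * ((k + 1) / 2 : ℕ)) =
      1 + (-1) ^ k := by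
  obtain ⟨j, rfl | rfl⟩ := Nat.even_or_odd' k
  · rw [show (2 * j + 2) / 2 = j + 1 by omega, show (2 * j + 1) / 2 = j by omega, pow_succ,
      pow_mul]
    push_cast
    ring
  · rw [show (2 * j + 1 + 2) / 2 = j + 1 by omega, show (2 * j + 1 + 1) / 2 = j + 1 by omega,
      pow_succ, pow_succ, pow_mul]
    ring

theorem sec_cos_sum_general (n k : ℕ) (hk : k ≤ 2 * n - 1) :
    ∑ l ∈ Finset.range n,
      (Real.cos (π * l / (2 * n)))⁻¹ * Real.cos ((2 * k + 1) * l * π / (2 * n)) =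
    (-1 : ℝ) ^ k * ((n : ℝ) - 2 * ((k + 1) / 2 : ℕ)) := by
  change secCosSum n k = _
  induction k with
  | zero => simp [secCosSum_zero]
  | succ k ih =>
    have hrec := secCosSum_succ_add (n := n) (k := k) (by omega)
    rw [ih (by omega)] at hrec
    linarith [neg_one_pow_mul_sub_two_mul_half_succ_add n k]

theorem sec_cos_sum (n k : ℕ) (hn : 1 ≤ n) (hk : k ≤ 2 * n - 1) :
    ∑ l ∈ Finset.range n,
      (Real.cos (π * l / (2 * n)))⁻¹ * Real.cos ((2 * k + 1) * l * π / (2 * n)) =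
    (-1 : ℝ) ^ k * ((n : ℝ) - 2 * ((k + 1) / 2 : ℕ)) :=
  sec_cos_sum_general n k hk
end

section
/- For every odd natural number n ≥ 1 and every real φ such that φ + πl/n is not an integer multiple of π for any l = 0,...,n−1, one has ∑_{l=0}^{n-1} (−1)^l·csc(φ + πl/n) = n·csc(nφ). -/
open Real Finset

/-! Put `u = e^{iφ}`, `w = e^{iπ/n}`, `x = u²` and `ζ = w²`, a primitive `n`-th root of unity.
Then `csc (φ + πl/n) = 2i u w^l / (x ζ^l - 1)`, and for `n = 2t + 1` the sign is absorbed as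
`(-1)^l w^l = ζ^{(t+1)l}`. Expanding `1 / (x ζ^l - 1)` as a geometric sum over `x^n - 1` and
summing over `l`, orthogonality of the powers of `ζ` keeps only the term `n x^t / (x^n - 1)`, and
`2i u · n x^t / (x^n - 1) = n csc (nφ)`. -/

theorem mul_pow_pow_of_pow_eq_one {M : Type*} [CommMonoid M] {ζ : M} {n : ℕ} (hζ : ζ ^ n = 1)
    (x : M) (l : ℕ) : (x * ζ ^ l) ^ n = x ^ n := by
  rw [mul_pow, ← pow_mul, mul_comm l, pow_mul, hζ, one_pow, mul_one]

namespace IsPrimitiveRoot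

variable {K : Type*} [Field K] {ζ : K} {n : ℕ}

theorem geom_sum_pow_eq_ite_s6 (hζ : IsPrimitiveRoot ζ n) (j : ℕ) :
    ∑ l ∈ range n, (ζ ^ j) ^ l = if n ∣ j then (n : K) else 0 := by
  split_ifs with hj
  · simp [(hζ.pow_eq_one_iff_dvd j).2 hj]
  · rw [geom_sum_eq (mt (hζ.pow_eq_one_iff_dvd j).1 hj), ← pow_mul, mul_comm, pow_mul,
      hζ.pow_eq_one, one_pow, sub_self, zero_div]

theorem pow_ne_one_iff_forall_mul_pow_ne_one [NeZero n] (hζ : IsPrimitiveRoot ζ n) {x : K} :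
    x ^ n ≠ 1 ↔ ∀ l < n, x * ζ ^ l ≠ 1 := by
  refine ⟨fun hx l _ h => hx ?_, fun h hx => ?_⟩
  · rw [← mul_pow_pow_of_pow_eq_one hζ.pow_eq_one x l, h, one_pow]
  · have hx0 : x ≠ 0 := by rintro rfl; simp [NeZero.ne n] at hx
    obtain ⟨i, hi, hζi⟩ :=
      hζ.eq_pow_of_pow_eq_one (ξ := x⁻¹) (by rw [inv_pow, hx, inv_one])
    exact h i hi (by rw [hζi, mul_inv_cancel₀ hx0])

theorem sum_pow_mul_div_mul_pow_sub_one (hζ : IsPrimitiveRoot ζ n) {x : K} (hx : x ^ n ≠ 1)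
    {j : ℕ} (hj : 0 < j) (hjn : j ≤ n) :
    ∑ l ∈ range n, ζ ^ (j * l) / (x * ζ ^ l - 1) = n * x ^ (n - j) / (x ^ n - 1) := by
  have hxn : x ^ n - 1 ≠ 0 := sub_ne_zero.2 hx
  have hterm (l : ℕ) : ζ ^ (j * l) / (x * ζ ^ l - 1) =
      (∑ k ∈ range n, (ζ ^ (j + k)) ^ l * x ^ k) / (x ^ n - 1) := by
    have hl : x * ζ ^ l - 1 ≠ 0 := sub_ne_zero.2 fun h =>
      hx (by rw [← mul_pow_pow_of_pow_eq_one hζ.pow_eq_one x l, h, one_pow])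
    rw [div_eq_div_iff hl hxn, ← mul_pow_pow_of_pow_eq_one hζ.pow_eq_one x l, ← geom_sum_mul,
      ← mul_assoc, mul_sum]
    congr 1
    refine sum_congr rfl fun k _ => ?_
    ring
  have hdvd : ∀ k < n, n ∣ j + k ↔ k = n - j := fun k hk => by
    refine ⟨fun ⟨c, hc⟩ => ?_, fun h => ⟨1, by omega⟩⟩
    rcases c with _ | _ | c <;> [omega; omega; nlinarith]
  simp_rw [hterm, ← sum_div]
  rw [sum_comm]
  simp_rw [← sum_mul, hζ.geom_sum_pow_eq_ite_s6, ite_mul, zero_mul]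
  rw [sum_congr rfl fun k hk => by rw [if_congr (hdvd k (mem_range.1 hk)) rfl rfl],
    sum_ite_eq' _ _ _, if_pos (mem_range.2 (by omega))]

end IsPrimitiveRoot

namespace Complex

theorem exp_mul_I_sq_sub_one (z : ℂ) : exp (z * I) ^ 2 - 1 = 2 * I * exp (z * I) * sin z := by
  have h : exp (z * I) * exp (-z * I) = 1 := by rw [← exp_add]; simp
  rw [sin]
  linear_combination h + exp (z * I) * (exp (z * I) - exp (-z * I)) * I_sq

-- When `sin z = 0` both sides are `0`.
theorem inv_sin_eq (z : ℂ) : (sin z)⁻¹ = 2 * I * exp (z * I) / (exp (z * I) ^ 2 - 1) := by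
  rw [exp_mul_I_sq_sub_one, div_mul_cancel_left₀ (by simp [exp_ne_zero])]

variable {n : ℕ}

theorem exp_pi_div_mul_I_pow_self [NeZero n] : exp (π / n * I) ^ n = -1 := by
  rw [← exp_nat_mul, ← mul_assoc, mul_div_cancel₀ _ (NeZero.ne (n : ℂ)), exp_pi_mul_I]

theorem isPrimitiveRoot_exp_pi_div_mul_I_sq [NeZero n] :
    IsPrimitiveRoot (exp (π / n * I) ^ 2) n := by
  convert isPrimitiveRoot_exp n (NeZero.ne n) using 1
  rw [← exp_nat_mul]
  ring_nf

theorem sum_neg_one_pow_mul_inv_sin_add (hodd : Odd n) (z : ℂ)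
    (hz : ∀ l < n, sin (z + π * l / n) ≠ 0) :
    ∑ l ∈ range n, (-1) ^ l * (sin (z + π * l / n))⁻¹ = n * (sin (n * z))⁻¹ := by
  have : NeZero n := ⟨hodd.pos.ne'⟩
  obtain ⟨t, ht⟩ := hodd
  set u := exp (z * I)
  set w := exp (π / n * I)
  have hζ : IsPrimitiveRoot (w ^ 2) n := isPrimitiveRoot_exp_pi_div_mul_I_sq
  have hexp (l : ℕ) : exp ((z + π * l / n) * I) = u * w ^ l := by
    rw [← exp_nat_mul, ← exp_add]
    ring_nf
  have hsign (l : ℕ) : (-1) ^ l * w ^ l = (w ^ 2) ^ ((t + 1) * l) := by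
    rw [← exp_pi_div_mul_I_pow_self (n := n), ← mul_pow, ← pow_succ, ← pow_mul, ← pow_mul]
    congr 1
    rw [ht]
    ring
  have hx : ∀ l < n, u ^ 2 * (w ^ 2) ^ l ≠ 1 := fun l hl => by
    rw [show u ^ 2 * (w ^ 2) ^ l = (u * w ^ l) ^ 2 by ring, ← hexp, ← sub_ne_zero,
      exp_mul_I_sq_sub_one]
    exact mul_ne_zero (by simp [exp_ne_zero]) (hz l hl)
  calc ∑ l ∈ range n, (-1) ^ l * (sin (z + π * l / n))⁻¹
      = 2 * I * u * ∑ l ∈ range n, (w ^ 2) ^ ((t + 1) * l) / (u ^ 2 * (w ^ 2) ^ l - 1) := by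
        rw [mul_sum]
        refine sum_congr rfl fun l _ => ?_
        rw [inv_sin_eq, hexp, ← hsign]
        ring
    _ = n * (sin (n * z))⁻¹ := by
        rw [hζ.sum_pow_mul_div_mul_pow_sub_one (hζ.pow_ne_one_iff_forall_mul_pow_ne_one.2 hx)
          (by omega) (by omega), inv_sin_eq,
          show exp (n * z * I) = u ^ n by rw [mul_assoc, exp_nat_mul],
          show n - (t + 1) = t by omega, ← pow_mul u 2 n, mul_comm 2 n, pow_mul,
          show u ^ n = u * (u ^ 2) ^ t by rw [ht]; ring]
        ring

end Complex

theorem alt_csc_sum_general (n : ℕ) (hodd : Odd n) (φ : ℝ)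
    (h : ∀ l < n, ∀ k : ℤ, φ + π * l / n ≠ k * π) :
    ∑ l ∈ Finset.range n, (-1 : ℝ) ^ l * (Real.sin (φ + π * l / n))⁻¹ =
      n * (Real.sin (n * φ))⁻¹ := by
  apply Complex.ofReal_injective
  push_cast
  refine Complex.sum_neg_one_pow_mul_inv_sin_add hodd φ fun l hl hs => ?_
  obtain ⟨k, hk⟩ := Complex.sin_eq_zero_iff.1 hs
  exact h l hl k (by exact_mod_cast hk)

theorem alt_csc_sum (n : ℕ) (hn : 1 ≤ n) (hodd : Odd n) (φ : ℝ)
    (h : ∀ l < n, ∀ k : ℤ, φ + π * l / n ≠ k * π) :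
    ∑ l ∈ Finset.range n, (-1 : ℝ) ^ l * (Real.sin (φ + π * l / n))⁻¹ =
      n * (Real.sin (n * φ))⁻¹ :=
  alt_csc_sum_general n hodd φ h
end

section
/- For every natural number n ≥ 1 and every real φ with nφ not an integer multiple of π, one has ∑_{l=0}^{n-1} csc²(φ + πl/n) = n²·csc²(nφ). -/
open Real Finset

/-!
With `u = exp (2 z I)` one has `csc² z = -4 u / (u - 1)²`, and the shifts `z + π l / n` correspond
to `u ζ^l` for a primitive `n`-th root of unity `ζ`. All these share `uⁿ`, and
`(u - 1)(1 + u + ⋯ + u^(n-1)) = uⁿ - 1`, so `∑ u_l / (u_l - 1)² = (uⁿ - 1)⁻² ∑_l u_l (∑_j u_l^j)²`.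
Summing over the roots of unity kills every monomial `u^m` with `n ∤ m`; exactly `n` of the
monomials `u^(j+k+1)` are `uⁿ`, which leaves `n² uⁿ / (uⁿ - 1)²`, i.e. `n² csc² (n z)`.
-/

theorem Nat.dvd_add_add_one_iff {n j k : ℕ} (hj : j < n) (hk : k < n) :
    n ∣ j + k + 1 ↔ k = n - 1 - j := by
  constructor
  · rintro ⟨c, hc⟩
    obtain rfl : c = 1 := by nlinarith
    omega
  · rintro rfl
    exact ⟨1, by omega⟩

theorem div_sub_one_sq_eq_mul_geom_sum_sq {K : Type*} [Field K] {u : K} {n : ℕ} (hu : u ^ n ≠ 1) :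
    u / (u - 1) ^ 2 = u * (∑ j ∈ range n, u ^ j) ^ 2 / (u ^ n - 1) ^ 2 := by
  rw [← sub_ne_zero, ← mul_geom_sum] at hu
  rw [← mul_geom_sum, mul_pow, mul_div_mul_right _ _ (pow_ne_zero 2 (right_ne_zero_of_mul hu))]

namespace IsPrimitiveRoot

section CommRing

variable {R : Type*} [CommRing R] [IsDomain R] {ζ : R} {n : ℕ}

theorem sum_range_pow_pow (hζ : IsPrimitiveRoot ζ n) (m : ℕ) :
    ∑ l ∈ range n, (ζ ^ m) ^ l = if n ∣ m then (n : R) else 0 := by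
  split_ifs with hm
  · simp [(hζ.pow_eq_one_iff_dvd m).2 hm]
  · have hne : ζ ^ m - 1 ≠ 0 := sub_ne_zero.2 fun h => hm ((hζ.pow_eq_one_iff_dvd m).1 h)
    apply mul_left_cancel₀ hne
    rw [mul_geom_sum, ← pow_mul, pow_mul', hζ.pow_eq_one, one_pow, sub_self, mul_zero]

theorem sum_mul_geom_sum_sq (hζ : IsPrimitiveRoot ζ n) (w : R) :
    ∑ l ∈ range n, w * ζ ^ l * (∑ j ∈ range n, (w * ζ ^ l) ^ j) ^ 2 = n ^ 2 * w ^ n := by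
  have expand : ∀ l, w * ζ ^ l * (∑ j ∈ range n, (w * ζ ^ l) ^ j) ^ 2 =
      ∑ j ∈ range n, ∑ k ∈ range n, w ^ (j + k + 1) * (ζ ^ (j + k + 1)) ^ l := by
    intro l
    rw [sq, sum_mul_sum, mul_sum]
    refine sum_congr rfl fun j _ => ?_
    rw [mul_sum]
    refine sum_congr rfl fun k _ => ?_
    ring
  have diagonal : ∀ j ∈ range n,
      ∑ k ∈ range n, w ^ (j + k + 1) * (if n ∣ j + k + 1 then (n : R) else 0) = n * w ^ n := by
    intro j hj
    have hj := mem_range.1 hj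
    rw [sum_eq_single_of_mem (n - 1 - j) (mem_range.2 (by omega))]
    · rw [if_pos ((Nat.dvd_add_add_one_iff hj (by omega)).2 rfl),
        show j + (n - 1 - j) + 1 = n by omega, mul_comm]
    · intro k hk hkj
      rw [if_neg (mt (Nat.dvd_add_add_one_iff hj (mem_range.1 hk)).1 hkj), mul_zero]
  calc ∑ l ∈ range n, w * ζ ^ l * (∑ j ∈ range n, (w * ζ ^ l) ^ j) ^ 2
      = ∑ j ∈ range n, ∑ k ∈ range n, w ^ (j + k + 1) * ∑ l ∈ range n, (ζ ^ (j + k + 1)) ^ l := by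
        simp only [expand, mul_sum]
        rw [sum_comm]
        exact sum_congr rfl fun j _ => sum_comm
    _ = ∑ j ∈ range n, (n : R) * w ^ n := by
        simp only [hζ.sum_range_pow_pow]
        exact sum_congr rfl diagonal
    _ = n ^ 2 * w ^ n := by simp [sq, mul_assoc]

end CommRing

theorem sum_div_sub_one_sq {K : Type*} [Field K] {ζ : K} {n : ℕ} (hζ : IsPrimitiveRoot ζ n)
    {w : K} (hw : w ^ n ≠ 1) :
    ∑ l ∈ range n, w * ζ ^ l / (w * ζ ^ l - 1) ^ 2 = n ^ 2 * w ^ n / (w ^ n - 1) ^ 2 := by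
  have hζw : ∀ l, (w * ζ ^ l) ^ n = w ^ n := fun l => by
    rw [mul_pow, ← pow_mul, pow_mul', hζ.pow_eq_one, one_pow, mul_one]
  rw [← hζ.sum_mul_geom_sum_sq w, sum_div]
  refine sum_congr rfl fun l _ => ?_
  rw [div_sub_one_sq_eq_mul_geom_sum_sq (hζw l ▸ hw), hζw]

end IsPrimitiveRoot

namespace Complex

theorem sin_sq_eq_exp (z : ℂ) :
    sin z ^ 2 = -(exp (2 * z * I) - 1) ^ 2 / (4 * exp (2 * z * I)) := by
  have he := exp_ne_zero (z * I)
  have h2 : exp (2 * z * I) = exp (z * I) ^ 2 := by rw [← exp_nat_mul]; ring_nf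
  rw [sin, h2, neg_mul, exp_neg]
  field_simp
  linear_combination 4 * (1 - exp (z * I) ^ 2) ^ 2 * I_sq

theorem inv_sin_sq_eq_exp (z : ℂ) :
    (sin z)⁻¹ ^ 2 = -4 * exp (2 * z * I) / (exp (2 * z * I) - 1) ^ 2 := by
  rw [inv_pow, sin_sq_eq_exp, inv_div, div_neg, ← neg_div, ← neg_mul]

theorem sum_inv_sin_sq_add (n : ℕ) (z : ℂ) (hz : sin (n * z) ≠ 0) :
    ∑ l ∈ range n, (sin (z + π * l / n))⁻¹ ^ 2 = n ^ 2 * (sin (n * z))⁻¹ ^ 2 := by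
  have hn : n ≠ 0 := by rintro rfl; simp at hz
  set ζ := exp (2 * π * I / n)
  set w := exp (2 * z * I)
  have hζ : IsPrimitiveRoot ζ n := isPrimitiveRoot_exp n hn
  have hwn : exp (2 * (n * z) * I) = w ^ n := by rw [← exp_nat_mul]; ring_nf
  have hwζ : ∀ l : ℕ, exp (2 * (z + π * l / n) * I) = w * ζ ^ l := fun l => by
    rw [← exp_nat_mul, ← exp_add]; congr 1; field_simp
  have hw : w ^ n ≠ 1 := by
    intro h
    refine hz ((pow_eq_zero_iff two_ne_zero).1 ?_)
    rw [sin_sq_eq_exp, hwn, h]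
    simp
  calc ∑ l ∈ range n, (sin (z + π * l / n))⁻¹ ^ 2
      = ∑ l ∈ range n, -4 * (w * ζ ^ l / (w * ζ ^ l - 1) ^ 2) :=
        sum_congr rfl fun l _ => by rw [inv_sin_sq_eq_exp, hwζ, mul_div_assoc]
    _ = -4 * (n ^ 2 * w ^ n / (w ^ n - 1) ^ 2) := by rw [← mul_sum, hζ.sum_div_sub_one_sq hw]
    _ = n ^ 2 * (sin (n * z))⁻¹ ^ 2 := by rw [inv_sin_sq_eq_exp, hwn]; ring

end Complex

theorem csc_sq_sum_general (n : ℕ) (φ : ℝ)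
    (h : ∀ k : ℤ, (n : ℝ) * φ ≠ k * π) :
    ∑ l ∈ Finset.range n, (Real.sin (φ + π * l / n))⁻¹ ^ 2 =
      (n : ℝ) ^ 2 * (Real.sin (n * φ))⁻¹ ^ 2 := by
  have hsin : Real.sin (n * φ) ≠ 0 := fun hs =>
    let ⟨k, hk⟩ := Real.sin_eq_zero_iff.1 hs
    h k hk.symm
  exact_mod_cast Complex.sum_inv_sin_sq_add n φ (by exact_mod_cast hsin)

theorem csc_sq_sum (n : ℕ) (hn : 1 ≤ n) (φ : ℝ)
    (h : ∀ k : ℤ, (n : ℝ) * φ ≠ k * π) :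
    ∑ l ∈ Finset.range n, (Real.sin (φ + π * l / n))⁻¹ ^ 2 =
      (n : ℝ) ^ 2 * (Real.sin (n * φ))⁻¹ ^ 2 :=
  csc_sq_sum_general n φ h
end

section
/- For every odd natural number n ≥ 1 and every real φ such that φ + 2πl/n is not an integer multiple of π for any l = 0,...,n−1, one has ∑_{l=0}^{n-1} csc(φ + 2πl/n) = n·csc(nφ); and for every even natural number n ≥ 2 with the same nonvanishing condition, ∑_{l=0}^{n-1} csc(φ + 2πl/n) = 0. -/
open Real Finset

/-! With `z = e^{iφ}` and `ζ = e^{2πi/n}` one has `csc θ = 2i w / (w² - 1)` for `w = e^{iθ}`, so the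
odd case becomes the rational identity `∑ₗ w_l / (w_l² - 1) = n zⁿ / (z²ⁿ - 1)` for `w_l = z ζˡ`.
Multiplying the `l`-th term by `z²ⁿ - 1 = w_l²ⁿ - 1` turns it into the geometric sum
`∑_{k<n} w_l^{2k+1}`; summing over `l` kills every power except `2k + 1 = n`, the only odd multiple
of `n` below `2n`. The even case is the antiperiodicity `csc (θ + π) = -csc θ`, which cancels the
`l`-th term against the `(l + n/2)`-th. -/

theorem IsPrimitiveRoot.sum_range_pow_pow_s9 {R : Type*} [CommRing R] [IsDomain R] {ζ : R}
    {n : ℕ} (hζ : IsPrimitiveRoot ζ n) (j : ℕ) :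
    ∑ l ∈ range n, (ζ ^ j) ^ l = if n ∣ j then (n : R) else 0 := by
  split_ifs with hj
  · simp [(hζ.pow_eq_one_iff_dvd j).2 hj]
  · have hpow : (ζ ^ j) ^ n = 1 := by rw [← pow_mul, mul_comm, pow_mul, hζ.pow_eq_one, one_pow]
    have hgeom := geom_sum_mul (ζ ^ j) n
    rw [hpow, sub_self] at hgeom
    exact (mul_eq_zero.1 hgeom).resolve_right
      (sub_ne_zero.2 fun h1 => hj ((hζ.pow_eq_one_iff_dvd j).1 h1))

theorem IsPrimitiveRoot.exists_sq_mul_pow_eq_one {K : Type*} [Field K] {ζ z : K} {n : ℕ}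
    (hζ : IsPrimitiveRoot ζ n) (hn : Odd n) (hz : (z ^ n) ^ 2 = 1) :
    ∃ l < n, (z * ζ ^ l) ^ 2 = 1 := by
  have : NeZero n := ⟨hn.pos.ne'⟩
  have hz0 : z ≠ 0 := by rintro rfl; simp [hn.pos.ne'] at hz
  have hζ2 : IsPrimitiveRoot (ζ ^ 2) n := hζ.pow_of_coprime 2 (Nat.coprime_two_left.2 hn)
  obtain ⟨l, hl, hζl⟩ := hζ2.eq_pow_of_pow_eq_one (ξ := z⁻¹ ^ 2)
    (by rw [← pow_mul, inv_pow, mul_comm, pow_mul, hz, inv_one])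
  refine ⟨l, hl, ?_⟩
  rw [mul_pow, ← pow_mul, mul_comm l, pow_mul, hζl, ← mul_pow, mul_inv_cancel₀ hz0, one_pow]

theorem IsPrimitiveRoot.sum_div_sq_sub_one {K : Type*} [Field K] {ζ : K} {n : ℕ}
    (hζ : IsPrimitiveRoot ζ n) (hn : Odd n) (z : K) (hz : ∀ l < n, (z * ζ ^ l) ^ 2 ≠ 1) :
    ∑ l ∈ range n, z * ζ ^ l / ((z * ζ ^ l) ^ 2 - 1) = n * z ^ n / ((z ^ n) ^ 2 - 1) := by
  have hzn : (z ^ n) ^ 2 ≠ 1 := fun h1 => by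
    obtain ⟨l, hl, hl1⟩ := hζ.exists_sq_mul_pow_eq_one hn h1
    exact hz l hl hl1
  obtain ⟨m, hm⟩ := hn
  have hterm : ∀ l < n, z * ζ ^ l / ((z * ζ ^ l) ^ 2 - 1) * ((z ^ n) ^ 2 - 1) =
      ∑ k ∈ range n, z ^ (2 * k + 1) * (ζ ^ (2 * k + 1)) ^ l := by
    intro l hl
    have hgeom := geom_sum_mul ((z * ζ ^ l) ^ 2) n
    have hpow : ((z * ζ ^ l) ^ 2) ^ n = (z ^ n) ^ 2 := by
      rw [show ((z * ζ ^ l) ^ 2) ^ n = (z ^ n) ^ 2 * ((ζ ^ n) ^ l) ^ 2 by ring,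
        hζ.pow_eq_one, one_pow, one_pow, mul_one]
    rw [← hpow, ← hgeom, mul_comm _ ((z * ζ ^ l) ^ 2 - 1), ← mul_assoc,
      div_mul_cancel₀ _ (sub_ne_zero.2 (hz l hl)), mul_sum]
    exact sum_congr rfl fun k _ => by ring
  rw [eq_div_iff (sub_ne_zero.2 hzn), sum_mul]
  calc ∑ l ∈ range n, z * ζ ^ l / ((z * ζ ^ l) ^ 2 - 1) * ((z ^ n) ^ 2 - 1)
      = ∑ k ∈ range n, z ^ (2 * k + 1) * ∑ l ∈ range n, (ζ ^ (2 * k + 1)) ^ l := by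
        rw [sum_congr rfl fun l hl => hterm l (mem_range.1 hl), sum_comm]
        simp_rw [mul_sum]
    _ = ∑ k ∈ range n, z ^ (2 * k + 1) * if n ∣ 2 * k + 1 then (n : K) else 0 := by
        simp_rw [hζ.sum_range_pow_pow_s9]
    _ = n * z ^ n := by
        rw [sum_eq_single m, if_pos (hm ▸ dvd_rfl), hm, mul_comm]
        · intro k hk hkm
          have hndvd : ¬n ∣ 2 * k + 1 := fun hdvd => hkm <| by
            have := Nat.eq_of_dvd_of_lt_two_mul (by omega) hdvd (by rw [mem_range] at hk; omega)
            omega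
          rw [if_neg hndvd, mul_zero]
        · exact fun hm' => absurd (mem_range.2 (by omega)) hm'

theorem Complex.sin_eq_exp_sq_sub_one_div (θ : ℂ) :
    sin θ = (exp (θ * I) ^ 2 - 1) / (2 * I * exp (θ * I)) := by
  rw [sin, neg_mul, exp_neg]
  field_simp
  ring_nf
  simp [I_sq]

-- No hypothesis needed: if `sin θ = 0` then `exp (θ * I) ^ 2 = 1` and both sides are `0`.
theorem Complex.inv_sin_eq_s9 (θ : ℂ) :
    (sin θ)⁻¹ = 2 * I * exp (θ * I) / (exp (θ * I) ^ 2 - 1) := by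
  rw [sin_eq_exp_sq_sub_one_div, inv_div]

theorem Complex.exp_mul_I_sq_ne_one_of_sin_ne_zero {θ : ℂ} (h : sin θ ≠ 0) :
    exp (θ * I) ^ 2 ≠ 1 := by
  intro h1
  rw [sin_eq_exp_sq_sub_one_div, h1, sub_self, zero_div] at h
  exact h rfl

theorem Function.Antiperiodic.sum_range_add_two_mul_div_eq_zero {K M : Type*} [Field K]
    [CharZero K] [AddCommGroup M] {f : K → M} {c : K} (hf : Antiperiodic f c) {n : ℕ}
    (hn : Even n) (x : K) : ∑ l ∈ range n, f (x + 2 * c * l / n) = 0 := by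
  obtain ⟨m, rfl⟩ := hn
  rcases eq_or_ne m 0 with rfl | hm
  · simp
  have hshift : ∀ l : ℕ, x + 2 * c * ↑(m + l) / ↑(m + m) = x + 2 * c * l / ↑(m + m) + c := by
    intro l
    push_cast
    field_simp
    ring
  simp_rw [sum_range_add, hshift, show ∀ y, f (y + c) = -f y from hf, sum_neg_distrib,
    add_neg_cancel]

theorem sum_inv_sin_add_two_pi_mul_div_of_odd {n : ℕ} (hn : Odd n) {φ : ℝ}
    (h : ∀ l < n, sin (φ + 2 * π * l / n) ≠ 0) :
    ∑ l ∈ range n, (sin (φ + 2 * π * l / n))⁻¹ = n * (sin (n * φ))⁻¹ := by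
  have hζ := Complex.isPrimitiveRoot_exp n hn.pos.ne'
  set z := Complex.exp (φ * Complex.I)
  set ζ := Complex.exp (2 * π * Complex.I / n)
  have hexp (l : ℕ) : Complex.exp ((φ + 2 * π * l / n) * Complex.I) = z * ζ ^ l := by
    rw [← Complex.exp_nat_mul, ← Complex.exp_add]
    congr 1
    field_simp
  have hexpn : Complex.exp (n * φ * Complex.I) = z ^ n := by
    rw [← Complex.exp_nat_mul, mul_assoc]
  have hsum := hζ.sum_div_sq_sub_one hn z fun l hl => by
    rw [← hexp]
    exact Complex.exp_mul_I_sq_ne_one_of_sin_ne_zero (by exact_mod_cast h l hl)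
  apply Complex.ofReal_injective
  push_cast
  simp_rw [Complex.inv_sin_eq_s9, hexp, hexpn, mul_div_assoc (2 * Complex.I), ← mul_sum, hsum]
  ring

theorem csc_sum_two_pi_general (n : ℕ) (φ : ℝ)
    (h : ∀ l < n, ∀ k : ℤ, φ + 2 * π * l / n ≠ k * π) :
    (Odd n → ∑ l ∈ Finset.range n, (Real.sin (φ + 2 * π * l / n))⁻¹ =
      n * (Real.sin (n * φ))⁻¹) ∧
    (Even n → 2 ≤ n → ∑ l ∈ Finset.range n, (Real.sin (φ + 2 * π * l / n))⁻¹ = 0) := by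
  refine ⟨fun hodd => sum_inv_sin_add_two_pi_mul_div_of_odd hodd fun l hl hsin => ?_,
    fun heven _ => ?_⟩
  · obtain ⟨k, hk⟩ := sin_eq_zero_iff.1 hsin
    exact h l hl k hk.symm
  · have hcsc : Function.Antiperiodic (fun x => (sin x)⁻¹) π := fun x => by
      simp only [sin_add_pi, inv_neg]
    exact hcsc.sum_range_add_two_mul_div_eq_zero heven φ

theorem csc_sum_two_pi (n : ℕ) (hn : 1 ≤ n) (φ : ℝ)
    (h : ∀ l < n, ∀ k : ℤ, φ + 2 * π * l / n ≠ k * π) :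
    (Odd n → ∑ l ∈ Finset.range n, (Real.sin (φ + 2 * π * l / n))⁻¹ =
      n * (Real.sin (n * φ))⁻¹) ∧
    (Even n → 2 ≤ n → ∑ l ∈ Finset.range n, (Real.sin (φ + 2 * π * l / n))⁻¹ = 0) :=
  csc_sum_two_pi_general n φ h
end

section
/- For every natural number n ≥ 2 and real x with |x| ≠ 1 and all denominators nonzero, ∑_{l=1}^{n-1} 1/(1 − 2x·cos(πl/n) + x²) = n(x^{2n} + 1)/((x² − 1)(x^{2n} − 1)) − (x² + 1)/(x² − 1)². -/
/-!
With `ζ = exp (2πi / N)`, the logarithmic derivative of `X ^ N - 1 = ∏ k < N, (X - ζ ^ k)`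
gives `∑ k < N, x / (x - ζ ^ k) = N x ^ N / (x ^ N - 1)`. Since the Poisson kernel
`(1 - x²) / (1 - 2x cos θ + x²)` is the real part of `(e^{iθ} + x) / (e^{iθ} - x)`, this sums
the Poisson kernel over the `N`-th roots of unity in closed form. For `N = 2n` the angles `πk/n`
and `π(2n - k)/n` have the same cosine, so that full sum is twice the sum over `1 ≤ k < n` plus
the terms `k = 0` and `k = n`, at `cos = 1` and `cos = -1`.
-/

open Real Finset Polynomial

theorem IsPrimitiveRoot.sum_div_sub_pow {K : Type*} [Field K] {ζ : K} {N : ℕ}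
    (hζ : IsPrimitiveRoot ζ N) {x : K} (hx : x ^ N ≠ 1) :
    ∑ k ∈ range N, x / (x - ζ ^ k) = N * x ^ N / (x ^ N - 1) := by
  obtain ⟨M, rfl⟩ : ∃ M, N = M + 1 :=
    Nat.exists_eq_succ_of_ne_zero (by rintro rfl; exact hx (pow_zero x))
  have h := (X_pow_sub_one_splits hζ).eval_derivative_div_eval_of_ne_zero (x := x)
    (by simpa [sub_eq_zero] using hx)
  rw [← nthRoots, hζ.nthRoots_eq (one_pow _)] at h
  simp only [derivative_X_pow, derivative_sub, derivative_C, eval_sub, eval_pow, eval_X, eval_C,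
    eval_mul, mul_one, sub_zero, Multiset.map_map, Function.comp_def, add_tsub_cancel_right] at h
  calc ∑ k ∈ range (M + 1), x / (x - ζ ^ k)
      = x * ∑ k ∈ range (M + 1), 1 / (x - ζ ^ k) := by simp only [mul_sum, mul_one_div]
    _ = _ := by rw [sum_eq_multiset_sum, range_val, ← h, pow_succ]; ring

section Poisson

open Complex

theorem re_exp_add_div_exp_sub (θ r : ℝ) :
    ((cexp (θ * I) + r) / (cexp (θ * I) - r)).re =
      (1 - r ^ 2) / (1 - 2 * r * Real.cos θ + r ^ 2) := by
  have hD : (Real.cos θ - r) * (Real.cos θ - r) + Real.sin θ * Real.sin θ =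
      1 - 2 * r * Real.cos θ + r ^ 2 := by
    linear_combination Real.sin_sq_add_cos_sq θ
  rw [div_re, normSq_apply, ← add_div]
  simp only [add_re, sub_re, add_im, sub_im, exp_ofReal_mul_I_re, exp_ofReal_mul_I_im, ofReal_re,
    ofReal_im, add_zero, sub_zero, hD]
  congr 1
  linear_combination Real.sin_sq_add_cos_sq θ

theorem sum_range_poisson_kernel {N : ℕ} {x : ℝ} (hx : x ^ N ≠ 1) :
    ∑ k ∈ range N, (1 - x ^ 2) / (1 - 2 * x * Real.cos (2 * π * k / N) + x ^ 2) =
      N * (1 + x ^ N) / (1 - x ^ N) := by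
  have hN : N ≠ 0 := by rintro rfl; exact hx (pow_zero x)
  have hζ := Complex.isPrimitiveRoot_exp N hN
  set ζ := cexp (2 * π * I / N)
  have hxC : (x : ℂ) ^ N ≠ 1 := by exact_mod_cast hx
  have hζk : ∀ k : ℕ, ζ ^ k = cexp ((2 * π * k / N : ℝ) * I) := fun k => by
    rw [← Complex.exp_nat_mul]; push_cast; ring_nf
  have hpoisson (k : ℕ) : (ζ ^ k + x) / (ζ ^ k - x) = 1 - 2 * (x / (x - ζ ^ k)) := by
    have hζx : ζ ^ k - x ≠ 0 := fun h => hxC <| by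
      rw [← sub_eq_zero.1 h, ← pow_mul, mul_comm, pow_mul, hζ.pow_eq_one, one_pow]
    have hxζ : (x : ℂ) - ζ ^ k ≠ 0 := fun h => hζx (by linear_combination -h)
    field_simp
    ring
  calc ∑ k ∈ range N, (1 - x ^ 2) / (1 - 2 * x * Real.cos (2 * π * k / N) + x ^ 2)
      = (∑ k ∈ range N, (ζ ^ k + x) / (ζ ^ k - x)).re := by
        simp only [re_sum, hζk, re_exp_add_div_exp_sub]
    _ = ((N * (1 + x ^ N) / (1 - x ^ N) : ℝ) : ℂ).re := by
        have hx₁ : (x : ℂ) ^ N - 1 ≠ 0 := sub_ne_zero.2 hxC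
        have hx₂ : 1 - (x : ℂ) ^ N ≠ 0 := fun h => hx₁ (by linear_combination -h)
        rw [sum_congr rfl fun k _ => hpoisson k, sum_sub_distrib, ← mul_sum,
          hζ.sum_div_sub_pow hxC, sum_const, card_range, nsmul_eq_mul, mul_one]
        congr 1
        push_cast
        field_simp
        ring
    _ = _ := ofReal_re _

end Poisson

theorem Finset.sum_range_two_mul_eq_of_reflect {M : Type*} [AddCommMonoid M] {n : ℕ} (hn : 0 < n)
    (f : ℕ → M) (hf : ∀ k ∈ Ico 1 n, f (2 * n - k) = f k) :
    ∑ k ∈ range (2 * n), f k = f 0 + f n + 2 • ∑ k ∈ Ico 1 n, f k := by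
  have hlow : ∑ k ∈ range n, f k = f 0 + ∑ k ∈ Ico 1 n, f k := by
    rw [range_eq_Ico, sum_eq_sum_Ico_succ_bot hn]
  have hhigh : ∑ k ∈ Ico n (2 * n), f k = f n + ∑ k ∈ Ico 1 n, f k := by
    rw [sum_eq_sum_Ico_succ_bot (by omega), ← sum_congr rfl hf, sum_Ico_reflect f 1 (by omega),
      show 2 * n + 1 - n = n + 1 by omega, show 2 * n + 1 - 1 = 2 * n by omega]
  rw [← sum_range_add_sum_Ico f (by omega : n ≤ 2 * n), hlow, hhigh, two_nsmul]
  abel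

theorem sum_range_two_mul_cos_pi_mul_div {M : Type*} [AddCommMonoid M] {n : ℕ} (hn : 0 < n)
    (g : ℝ → M) :
    ∑ k ∈ range (2 * n), g (cos (π * k / n)) =
      g 1 + g (-1) + 2 • ∑ k ∈ Ico 1 n, g (cos (π * k / n)) := by
  have hn' : (n : ℝ) ≠ 0 := by positivity
  refine (sum_range_two_mul_eq_of_reflect hn _ fun k hk => ?_).trans ?_
  · have hk : k ≤ 2 * n := by simp only [mem_Ico] at hk; omega
    have : π * ((2 * n - k : ℕ) : ℝ) / n = -(π * k / n) + 2 * π := by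
      push_cast [hk]; field_simp; ring
    rw [this, cos_add_two_pi, cos_neg]
  · rw [Nat.cast_zero, mul_zero, zero_div, cos_zero, mul_div_cancel_right₀ _ hn', cos_pi]

theorem rational_cos_sum_half (n : ℕ) (hn : 2 ≤ n) (x : ℝ) (hx : |x| ≠ 1) :
    ∑ l ∈ Finset.Ico 1 n, 1 / (1 - 2 * x * Real.cos (π * l / n) + x ^ 2) =
      n * (x ^ (2 * n) + 1) / ((x ^ 2 - 1) * (x ^ (2 * n) - 1)) -
        (x ^ 2 + 1) / (x ^ 2 - 1) ^ 2 := by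
  obtain ⟨hx₁, hx₂⟩ : x - 1 ≠ 0 ∧ x + 1 ≠ 0 := by
    simpa [abs_eq zero_le_one, not_or, sub_eq_zero, add_eq_zero_iff_eq_neg] using hx
  have hxn : x ^ (2 * n) - 1 ≠ 0 := by
    rw [sub_ne_zero, Ne, pow_eq_one_iff_of_ne_zero (by omega)]
    grind
  have hfull := sum_range_poisson_kernel (sub_ne_zero.1 hxn)
  have hangle : ∀ k : ℕ, 2 * π * k / ((2 * n : ℕ) : ℝ) = π * k / n := fun k => by
    push_cast; field_simp
  simp only [hangle] at hfull
  rw [sum_range_two_mul_cos_pi_mul_div (by omega)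
    fun c => (1 - x ^ 2) / (1 - 2 * x * c + x ^ 2)] at hfull
  simp only [← mul_one_div (1 - x ^ 2), ← mul_sum] at hfull
  generalize ∑ l ∈ Ico 1 n, 1 / (1 - 2 * x * cos (π * l / n) + x ^ 2) = S at hfull ⊢
  rw [show 1 - 2 * x * 1 + x ^ 2 = (x - 1) ^ 2 by ring,
    show 1 - 2 * x * -1 + x ^ 2 = (x + 1) ^ 2 by ring,
    show 1 - x ^ 2 = -((x - 1) * (x + 1)) by ring,
    show 1 - x ^ (2 * n) = -(x ^ (2 * n) - 1) by ring, nsmul_eq_mul] at hfull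
  rw [show x ^ 2 - 1 = (x - 1) * (x + 1) by ring]
  push_cast at hfull
  field_simp at hfull ⊢
  linear_combination (-1 / 2) * hfull
end

section
/- For every natural number n ≥ 2, ∑_{l=1}^{n-1} csc(πl/n) = ∑_{l=1}^{n-1} cot(πl/(2n)). -/
/-!
Since `csc θ = cot (θ / 2) - cot θ`, the left side is the right side minus `∑ cot (π l / n)`,
and that sum vanishes because `l ↦ n - l` sends `cot (π l / n)` to its negative.
-/

open Real Finset

namespace Real

theorem cot_pi_sub (x : ℝ) : cot (π - x) = -cot x := by
  rw [cot_eq_cos_div_sin, cot_eq_cos_div_sin, cos_pi_sub, sin_pi_sub, neg_div]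

-- When `sin (2 * x) = 0`, all three terms are junk zeros.
theorem inv_sin_two_mul (x : ℝ) : (sin (2 * x))⁻¹ = cot x - cot (2 * x) := by
  rw [cot_eq_cos_div_sin, cot_eq_cos_div_sin, sin_two_mul, cos_two_mul]
  rcases eq_or_ne (sin x) 0 with hs | hs
  · simp [hs]
  rcases eq_or_ne (cos x) 0 with hc | hc
  · simp [hc]
  field_simp
  ring

theorem sum_Ico_cot_pi_mul_div_eq_zero (n : ℕ) :
    ∑ l ∈ Ico 1 n, cot (π * l / n) = 0 := by
  have hreflect : ∑ l ∈ Ico 1 n, cot (π * ↑(n - l) / n) = ∑ l ∈ Ico 1 n, cot (π * l / n) := by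
    simpa using sum_Ico_reflect (fun l : ℕ => cot (π * l / n)) 1 (Nat.le_succ n)
  have hanti : ∀ l ∈ Ico 1 n, cot (π * ↑(n - l) / n) = -cot (π * l / n) := by
    intro l hl
    have hln : l < n := (mem_Ico.1 hl).2
    have hn : (n : ℝ) ≠ 0 := Nat.cast_ne_zero.2 (by omega)
    rw [Nat.cast_sub hln.le, ← cot_pi_sub]
    congr 1
    field_simp
  rw [sum_congr rfl hanti, sum_neg_distrib] at hreflect
  linarith

end Real

theorem csc_sum_eq_cot_sum_general (n : ℕ) :
    ∑ l ∈ Finset.Ico 1 n, (Real.sin (π * l / n))⁻¹ =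
      ∑ l ∈ Finset.Ico 1 n, Real.cot (π * l / (2 * n)) := by
  have hdouble (l : ℕ) : π * l / n = 2 * (π * l / (2 * n)) := by
    rw [mul_div_assoc', mul_div_mul_left _ _ (two_ne_zero' ℝ)]
  simp_rw [hdouble, inv_sin_two_mul, sum_sub_distrib, ← hdouble,
    sum_Ico_cot_pi_mul_div_eq_zero, sub_zero]

theorem csc_sum_eq_cot_sum (n : ℕ) (hn : 2 ≤ n) :
    ∑ l ∈ Finset.Ico 1 n, (Real.sin (π * l / n))⁻¹ =
      ∑ l ∈ Finset.Ico 1 n, Real.cot (π * l / (2 * n)) :=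
  csc_sum_eq_cot_sum_general n
end

section
/- For every natural number n ≥ 2, ∑_{l=1}^{n-1} csc(πl/n) = (1/π)·∑_{l=1}^{n-1} (Ψ(1/2 + l/(2n)) − Ψ(l/(2n))). -/
/-!
Logarithmic differentiation of Euler's reflection formula `Γ(x) Γ(1 - x) = π / sin (π x)` gives
`ψ(1 - x) - ψ(x) = π cot (π x)` on `(0, 1)`. The summand `ψ(1/2 + x) - ψ(x)` at `x = l / (2n)`
and at `1/2 - x`, its image under `l ↦ n - l`, therefore add up to
`π (cot (π x) + tan (π x)) = 2π / sin (2π x) = 2π / sin (π l / n)`. Summing over `l` counts every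
summand twice.
-/

open Real Finset

/-- The digamma function: the logarithmic derivative of the Gamma function. -/
noncomputable def digamma (x : ℝ) : ℝ := deriv (fun y => Real.log (Real.Gamma y)) x

lemma hasDerivAt_log_Gamma {x : ℝ} (hx : 0 < x) :
    HasDerivAt (fun y => log (Gamma y)) (digamma x) x :=
  ((differentiableAt_Gamma fun m => ((neg_nonpos.mpr m.cast_nonneg).trans_lt hx).ne').log
    (Gamma_pos_of_pos hx).ne').hasDerivAt

lemma log_Gamma_add_log_Gamma_one_sub {x : ℝ} (h0 : 0 < x) (h1 : x < 1) :
    log (Gamma x) + log (Gamma (1 - x)) = log π - log (sin (π * x)) := by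
  have hsin : 0 < sin (π * x) := sin_pos_of_pos_of_lt_pi (by positivity) (by nlinarith [pi_pos])
  rw [← log_mul (Gamma_pos_of_pos h0).ne' (Gamma_pos_of_pos (by linarith)).ne',
    Gamma_mul_Gamma_one_sub, log_div pi_ne_zero hsin.ne']

lemma digamma_one_sub_sub_digamma {x : ℝ} (h0 : 0 < x) (h1 : x < 1) :
    digamma (1 - x) - digamma x = π * cot (π * x) := by
  have hlhs : HasDerivAt (fun y => log (Gamma y) + log (Gamma (1 - y)))
      (digamma x - digamma (1 - x)) x := by
    have hreflected : HasDerivAt (fun y => log (Gamma (1 - y))) (-digamma (1 - x)) x := by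
      have := (hasDerivAt_log_Gamma (by linarith : 0 < 1 - x)).comp x
        ((hasDerivAt_id' x).const_sub 1)
      rwa [mul_neg_one] at this
    rw [sub_eq_add_neg]
    exact (hasDerivAt_log_Gamma h0).add hreflected
  have hsin : 0 < sin (π * x) := sin_pos_of_pos_of_lt_pi (by positivity) (by nlinarith [pi_pos])
  have hrhs : HasDerivAt (fun y => log π - log (sin (π * y)))
      (-(cos (π * x) * π / sin (π * x))) x :=
    (((hasDerivAt_id x).const_mul π).sin.log (by simpa using hsin.ne')).const_sub _
      |>.congr_deriv (by simp)
  have heq : (fun y => log (Gamma y) + log (Gamma (1 - y))) =ᶠ[nhds x]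
      fun y => log π - log (sin (π * y)) := by
    filter_upwards [isOpen_Ioo.mem_nhds ⟨h0, h1⟩] with y hy
    exact log_Gamma_add_log_Gamma_one_sub hy.1 hy.2
  have hderiv := (hlhs.congr_of_eventuallyEq heq.symm).unique hrhs
  rw [cot_eq_cos_div_sin]
  linarith [show π * (cos (π * x) / sin (π * x)) = cos (π * x) * π / sin (π * x) by ring]

lemma cot_pi_div_two_sub (θ : ℝ) : cot (π / 2 - θ) = tan θ := by
  rw [cot_eq_cos_div_sin, tan_eq_sin_div_cos, cos_pi_div_two_sub, sin_pi_div_two_sub]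

lemma cot_add_tan {θ : ℝ} (hs : sin θ ≠ 0) (hc : cos θ ≠ 0) :
    cot θ + tan θ = 2 / sin (2 * θ) := by
  rw [cot_eq_cos_div_sin, tan_eq_sin_div_cos, sin_two_mul]
  field_simp
  linear_combination cos_sq_add_sin_sq θ

lemma digamma_diff_add_digamma_diff_half_sub {x : ℝ} (h0 : 0 < x) (h1 : x < 1 / 2) :
    (digamma (1 / 2 + x) - digamma x) + (digamma (1 / 2 + (1 / 2 - x)) - digamma (1 / 2 - x)) =
      2 * π / sin (2 * π * x) := by
  have hs : sin (π * x) ≠ 0 :=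
    (sin_pos_of_pos_of_lt_pi (by positivity) (by nlinarith [pi_pos])).ne'
  have hc : cos (π * x) ≠ 0 :=
    (cos_pos_of_mem_Ioo ⟨by nlinarith [pi_pos], by nlinarith [pi_pos]⟩).ne'
  have hx := digamma_one_sub_sub_digamma h0 (by linarith)
  have hhalf_sub := digamma_one_sub_sub_digamma (x := 1 / 2 - x) (by linarith) (by linarith)
  rw [show π * (1 / 2 - x) = π / 2 - π * x by ring, cot_pi_div_two_sub] at hhalf_sub
  calc _ = π * (cot (π * x) + tan (π * x)) := by
          rw [show (1 : ℝ) / 2 + (1 / 2 - x) = 1 - x by ring,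
            show (1 : ℝ) / 2 + x = 1 - (1 / 2 - x) by ring]
          linarith
    _ = 2 * π / sin (2 * π * x) := by
          rw [cot_add_tan hs hc, mul_assoc]
          ring

lemma sum_Ico_one_half_sub_div {M : Type*} [AddCommMonoid M] (f : ℝ → M) (n : ℕ) :
    ∑ l ∈ Ico 1 n, f (1 / 2 - l / (2 * n)) = ∑ l ∈ Ico 1 n, f (l / (2 * n)) := by
  rcases Nat.eq_zero_or_pos n with rfl | hn
  · simp
  have hreflect := sum_Ico_reflect (fun l : ℕ => f (l / (2 * n))) 1 (m := n) (n := n) (by omega)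
  simp only [Nat.add_sub_cancel, Nat.add_sub_cancel_left] at hreflect
  rw [← hreflect]
  refine sum_congr rfl fun l hl => ?_
  rw [Nat.cast_sub (mem_Ico.1 hl).2.le]
  congr 1
  field_simp

theorem csc_sum_digamma_diff_general (n : ℕ) :
    ∑ l ∈ Finset.Ico 1 n, (Real.sin (π * l / n))⁻¹ =
      (1 / π) * ∑ l ∈ Finset.Ico 1 n,
        (digamma (1 / 2 + l / (2 * n)) - digamma (l / (2 * n))) := by
  set D : ℝ → ℝ := fun x => digamma (1 / 2 + x) - digamma x
  have hpair : ∀ l ∈ Ico 1 n,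
      D (l / (2 * n)) + D (1 / 2 - l / (2 * n)) = 2 * (π * (sin (π * l / n))⁻¹) := by
    intro l hl
    have hl1 : (1 : ℝ) ≤ l := by exact_mod_cast (mem_Ico.1 hl).1
    have hln : (l : ℝ) < n := by exact_mod_cast (mem_Ico.1 hl).2
    have hx1 : (l : ℝ) / (2 * n) < 1 / 2 := by
      rw [div_lt_iff₀ (by linarith)]
      linarith
    rw [digamma_diff_add_digamma_diff_half_sub (div_pos (by linarith) (by linarith)) hx1]
    field_simp
  have hdouble : 2 * ∑ l ∈ Ico 1 n, D (l / (2 * n)) =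
      2 * (π * ∑ l ∈ Ico 1 n, (sin (π * l / n))⁻¹) := by
    rw [two_mul]
    nth_rw 2 [← sum_Ico_one_half_sub_div D n]
    rw [← sum_add_distrib, sum_congr rfl hpair, mul_sum, mul_sum]
  rw [mul_left_cancel₀ two_ne_zero hdouble, one_div, inv_mul_cancel_left₀ pi_ne_zero]

theorem csc_sum_digamma_diff (n : ℕ) (hn : 2 ≤ n) :
    ∑ l ∈ Finset.Ico 1 n, (Real.sin (π * l / n))⁻¹ =
      (1 / π) * ∑ l ∈ Finset.Ico 1 n,
        (digamma (1 / 2 + l / (2 * n)) - digamma (l / (2 * n))) :=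
  csc_sum_digamma_diff_general n
end

section
/- For every natural number n ≥ 2, ∑_{l=1}^{n-1} csc(πl/n) = (2n/π)·∫_0^∞ (tanh(n x)/tanh(x) − 1) dx, where the improper integral converges. -/
open Real MeasureTheory Set

/-!
For `x ≠ 0`, putting `u = e^{-2x}` and summing a geometric series gives
`tanh (n x) / tanh x - 1 = 2 ∑_{k=1}^{n-1} e^{-2kx} / (1 + e^{-2nx})`.
The left side is even, so its integral over `(0, ∞)` is half its integral over `ℝ`, and the
substitution `t = e^{-2nx}` turns the `k`-th term into the Mellin integral
`∫₀^∞ t^{a-1} / (1 + t) dt` with `a = k / n`. Writing `1 / (1 + t) = ∫₀^∞ e^{-(1+t)u} du` and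
swapping the integrals shows that this equals `Γ(a) Γ(1 - a) = π / sin (π a)`.
-/

section MellinOneAdd

variable {a : ℝ}

lemma integral_Ioi_rpow_mul_exp_neg_one_add_mul_eq_div {t : ℝ} (ht : 0 < t) :
    ∫ u in Ioi 0, t ^ (a - 1) * exp (-(1 + t) * u) = t ^ (a - 1) / (1 + t) := by
  rw [integral_const_mul, integral_exp_mul_Ioi (by linarith), mul_zero, exp_zero, div_neg,
    neg_div, neg_neg, mul_one_div]

lemma integral_Ioi_rpow_mul_exp_neg_one_add_mul_eq_Gamma (ha : 0 < a) {u : ℝ} (hu : 0 < u) :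
    ∫ t in Ioi 0, t ^ (a - 1) * exp (-(1 + t) * u) = Gamma a * (exp (-u) * u ^ ((1 - a) - 1)) := by
  have hsplit : ∀ t : ℝ, t ^ (a - 1) * exp (-(1 + t) * u) =
      exp (-u) * (t ^ (a - 1) * exp (-(u * t))) := fun t => by
    rw [show -(1 + t) * u = -u + -(u * t) by ring, exp_add]; ring
  simp_rw [hsplit]
  rw [integral_const_mul, integral_rpow_mul_exp_neg_mul_Ioi ha hu, one_div, inv_rpow hu.le,
    ← rpow_neg hu.le, show (1 - a) - 1 = -a by ring]
  ring

lemma integrable_rpow_mul_exp_neg_one_add_mul (ha0 : 0 < a) (ha1 : a < 1) :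
    Integrable (fun p : ℝ × ℝ => p.1 ^ (a - 1) * exp (-(1 + p.1) * p.2))
      ((volume.restrict (Ioi 0)).prod (volume.restrict (Ioi 0))) := by
  refine (integrable_prod_iff' (by fun_prop)).2 ⟨?_, ?_⟩
  · filter_upwards [ae_restrict_mem measurableSet_Ioi] with u (hu : 0 < u)
    have := (integrableOn_rpow_mul_exp_neg_mul_rpow (by linarith : -1 < a - 1) one_pos hu).const_mul
      (exp (-u))
    refine IntegrableOn.congr_fun this (fun t _ => ?_) measurableSet_Ioi
    rw [rpow_one, show -(1 + t) * u = -u + -u * t by ring, exp_add]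
    ring
  · have := (GammaIntegral_convergent (by linarith : 0 < 1 - a)).const_mul (Gamma a)
    refine IntegrableOn.congr_fun this (fun u (hu : 0 < u) => ?_) measurableSet_Ioi
    rw [← integral_Ioi_rpow_mul_exp_neg_one_add_mul_eq_Gamma ha0 hu]
    refine setIntegral_congr_fun measurableSet_Ioi fun t (ht : 0 < t) => ?_
    exact (Real.norm_of_nonneg (by positivity)).symm

lemma integrableOn_rpow_div_one_add (ha0 : 0 < a) (ha1 : a < 1) :
    IntegrableOn (fun t : ℝ => t ^ (a - 1) / (1 + t)) (Ioi 0) :=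
  IntegrableOn.congr_fun (integrable_rpow_mul_exp_neg_one_add_mul ha0 ha1).integral_prod_left
    (fun _ ht => integral_Ioi_rpow_mul_exp_neg_one_add_mul_eq_div ht) measurableSet_Ioi

theorem integral_rpow_div_one_add (ha0 : 0 < a) (ha1 : a < 1) :
    ∫ t in Ioi 0, t ^ (a - 1) / (1 + t) = π / sin (π * a) :=
  calc ∫ t in Ioi 0, t ^ (a - 1) / (1 + t)
      = ∫ t in Ioi 0, ∫ u in Ioi 0, t ^ (a - 1) * exp (-(1 + t) * u) :=
        setIntegral_congr_fun measurableSet_Ioi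
          fun _ ht => (integral_Ioi_rpow_mul_exp_neg_one_add_mul_eq_div ht).symm
    _ = ∫ u in Ioi 0, ∫ t in Ioi 0, t ^ (a - 1) * exp (-(1 + t) * u) :=
        integral_integral_swap (integrable_rpow_mul_exp_neg_one_add_mul ha0 ha1)
    _ = ∫ u in Ioi 0, Gamma a * (exp (-u) * u ^ ((1 - a) - 1)) :=
        setIntegral_congr_fun measurableSet_Ioi
          fun _ hu => integral_Ioi_rpow_mul_exp_neg_one_add_mul_eq_Gamma ha0 hu
    _ = π / sin (π * a) := by
        rw [integral_const_mul, ← Gamma_eq_integral (by linarith), Gamma_mul_Gamma_one_sub]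

end MellinOneAdd

lemma hasDerivAt_exp_neg_mul (q x : ℝ) :
    HasDerivAt (fun y => exp (-(q * y))) (-(q * exp (-(q * x)))) x := by
  have := ((hasDerivAt_id x).const_mul q).neg.exp
  simp only [id, mul_one] at this
  rwa [show -(q * exp (-(q * x))) = exp (-(q * x)) * -q by ring]

section ExpSubstitution

variable {q : ℝ}

lemma injective_exp_neg_mul (hq : q ≠ 0) : Function.Injective fun y => exp (-(q * y)) :=
  fun _ _ h => by simpa [hq] using exp_injective h

lemma image_exp_neg_mul_univ (hq : q ≠ 0) : (fun y => exp (-(q * y))) '' univ = Ioi 0 := by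
  refine Subset.antisymm (image_subset_iff.2 fun y _ => exp_pos _) fun t (ht : 0 < t) => ?_
  refine ⟨-(log t / q), trivial, ?_⟩
  simp only [mul_neg, neg_neg, mul_div_cancel₀ _ hq, exp_log ht]

lemma integrableOn_Ioi_iff_integrable_comp_exp_neg_mul (hq : 0 < q) (g : ℝ → ℝ) :
    IntegrableOn g (Ioi (0 : ℝ)) ↔ Integrable fun x => q * exp (-(q * x)) * g (exp (-(q * x))) := by
  rw [← image_exp_neg_mul_univ hq.ne', integrableOn_image_iff_integrableOn_abs_deriv_smul
    MeasurableSet.univ (fun x _ => (hasDerivAt_exp_neg_mul q x).hasDerivWithinAt)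
    (injective_exp_neg_mul hq.ne').injOn, integrableOn_univ]
  simp only [abs_neg, abs_of_pos (mul_pos hq (exp_pos _)), smul_eq_mul]

lemma integral_Ioi_eq_integral_comp_exp_neg_mul (hq : 0 < q) (g : ℝ → ℝ) :
    ∫ t in Ioi 0, g t = ∫ x, q * exp (-(q * x)) * g (exp (-(q * x))) := by
  rw [← image_exp_neg_mul_univ hq.ne', integral_image_eq_integral_abs_deriv_smul
    MeasurableSet.univ (fun x _ => (hasDerivAt_exp_neg_mul q x).hasDerivWithinAt)
    (injective_exp_neg_mul hq.ne').injOn, Measure.restrict_univ]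
  simp only [abs_neg, abs_of_pos (mul_pos hq (exp_pos _)), smul_eq_mul]

end ExpSubstitution

lemma mul_exp_neg_mul_mul_rpow_div_one_add {p q : ℝ} (hq : 0 < q) (x : ℝ) :
    q * exp (-(q * x)) * (exp (-(q * x)) ^ (p / q - 1) / (1 + exp (-(q * x)))) =
      q * (exp (-(p * x)) / (1 + exp (-(q * x)))) := by
  have hpow : exp (-(q * x)) * exp (-(q * x)) ^ (p / q - 1) = exp (-(p * x)) := by
    rw [← exp_mul, ← exp_add]
    congr 1
    field_simp
    ring
  rw [← hpow]
  ring

lemma integrable_exp_neg_mul_div_one_add_exp_neg_mul {p q : ℝ} (hp : 0 < p) (hpq : p < q) :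
    Integrable fun x => exp (-(p * x)) / (1 + exp (-(q * x))) := by
  have hq : 0 < q := hp.trans hpq
  have := (integrableOn_Ioi_iff_integrable_comp_exp_neg_mul hq _).1
    (integrableOn_rpow_div_one_add (a := p / q) (div_pos hp hq) ((div_lt_one hq).2 hpq))
  simp only [mul_exp_neg_mul_mul_rpow_div_one_add hq] at this
  simpa [hq.ne'] using this.const_mul q⁻¹

theorem integral_exp_neg_mul_div_one_add_exp_neg_mul {p q : ℝ} (hp : 0 < p) (hpq : p < q) :
    ∫ x, exp (-(p * x)) / (1 + exp (-(q * x))) = π / (q * sin (π * (p / q))) := by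
  have hq : 0 < q := hp.trans hpq
  have := integral_Ioi_eq_integral_comp_exp_neg_mul hq fun t => t ^ (p / q - 1) / (1 + t)
  rw [integral_rpow_div_one_add (div_pos hp hq) ((div_lt_one hq).2 hpq)] at this
  simp only [mul_exp_neg_mul_mul_rpow_div_one_add hq, integral_const_mul] at this
  rw [mul_comm q, ← div_div, this, mul_div_cancel_left₀ _ hq.ne']

lemma tanh_eq_one_sub_exp_div_one_add_exp (y : ℝ) :
    tanh y = (1 - exp (-(2 * y))) / (1 + exp (-(2 * y))) := by
  rw [tanh_eq, show -(2 * y) = -y + -y by ring, exp_add, exp_neg]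
  have := exp_pos y
  field_simp

lemma tanh_nat_mul_div_tanh_sub_one {n : ℕ} (hn : 1 ≤ n) {x : ℝ} (hx : x ≠ 0) :
    tanh (n * x) / tanh x - 1 =
      2 * ∑ k ∈ Finset.Ico 1 n, exp (-(2 * k * x)) / (1 + exp (-(2 * n * x))) := by
  have hpow : ∀ m : ℕ, exp (-(2 * m * x)) = exp (-(2 * x)) ^ m := fun m => by
    rw [← exp_nat_mul]; ring_nf
  simp only [tanh_eq_one_sub_exp_div_one_add_exp, ← mul_assoc, hpow, ← Finset.sum_div]
  set u := exp (-(2 * x))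
  have hu1 : u ≠ 1 := by simpa [u, exp_eq_one_iff] using hx
  have hu : 0 < u := exp_pos _
  rw [geom_sum_Ico hu1 hn, pow_one]
  have : 1 - u ≠ 0 := sub_ne_zero.2 hu1.symm
  have : u - 1 ≠ 0 := sub_ne_zero.2 hu1
  field_simp
  ring

theorem csc_sum_integral (n : ℕ) (hn : 2 ≤ n) :
    IntegrableOn (fun x : ℝ => Real.tanh (n * x) / Real.tanh x - 1) (Set.Ioi 0) ∧
    ∑ l ∈ Finset.Ico 1 n, (Real.sin (π * l / n))⁻¹ =
      (2 * n / π) * ∫ x in Set.Ioi (0 : ℝ), (Real.tanh (n * x) / Real.tanh x - 1) := by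
  have hbounds : ∀ l ∈ Finset.Ico 1 n, (0 : ℝ) < 2 * l ∧ (2 * l : ℝ) < 2 * n := fun l hl => by
    obtain ⟨hl1, hln⟩ := Finset.mem_Ico.1 hl
    constructor <;> norm_cast <;> omega
  have hterm_int : ∀ l ∈ Finset.Ico 1 n,
      Integrable fun x : ℝ => exp (-(2 * l * x)) / (1 + exp (-(2 * n * x))) := fun l hl =>
    integrable_exp_neg_mul_div_one_add_exp_neg_mul (hbounds l hl).1 (hbounds l hl).2
  have hf_ae : (fun x : ℝ => tanh (n * x) / tanh x - 1) =ᵐ[volume]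
      fun x => 2 * ∑ l ∈ Finset.Ico 1 n, exp (-(2 * l * x)) / (1 + exp (-(2 * n * x))) :=
    (Measure.ae_ne volume 0).mono fun x hx => tanh_nat_mul_div_tanh_sub_one (by omega) hx
  have hf_abs : ∀ x : ℝ, tanh (n * |x|) / tanh |x| - 1 = tanh (n * x) / tanh x - 1 := fun x => by
    rcases abs_choice x with h | h <;> simp [h, tanh_neg, neg_div_neg_eq]
  refine ⟨(((integrable_finsetSum _ hterm_int).const_mul 2).congr hf_ae.symm).integrableOn, ?_⟩
  rw [← mul_div_cancel_left₀ (∫ x in Ioi (0 : ℝ), _) two_ne_zero, ← integral_comp_abs]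
  simp only [hf_abs]
  rw [integral_congr_ae hf_ae, integral_const_mul, integral_finsetSum _ hterm_int,
    Finset.mul_sum, Finset.sum_div, Finset.mul_sum]
  refine Finset.sum_congr rfl fun l hl => ?_
  rw [integral_exp_neg_mul_div_one_add_exp_neg_mul (hbounds l hl).1 (hbounds l hl).2,
    mul_div_mul_left _ _ two_ne_zero, ← mul_div_assoc]
  field_simp
end

section
/- For every natural number n ≥ 2, ∑_{l=1}^{n-1} csc(πl/n) < (2n/π)·(log(2n/π) + γ) + 1 − 1/π, where γ is the Euler–Mascheroni constant. -/
/-!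
On `(0, π)` write `csc x = 1/x + 1/(π - x) + r x`. At the nodes `π l / n` the two poles contribute
`(2n/π) H_{n-1} < (2n/π) (log n + γ)`. The remainder `r` has the primitive
`log tan (x/2) - log x + log (π - x)` and `|r'| ≤ 9/20` on `(0, π)`, so the midpoint rule bounds
`(π/n) ∑ r (π l / n)` by the integral of `r` over `[π/2n, π - π/2n]`, which is at most
`2 log (2/π) + 2/(2n-1)`, plus an error `9/20 (π/2n)²` per node. What is left over fits under
`1 - 1/π`.
-/

open Real Finset

lemma midpoint_rule_le {G g : ℝ → ℝ} {c h L : ℝ} (hh : 0 ≤ h)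
    (hG : ∀ t ∈ Set.Icc (c - h) (c + h), HasDerivAt G (g t) t)
    (hg : ∀ t ∈ Set.Icc (c - h) (c + h), |g t - g c| ≤ L * |t - c|) :
    2 * h * g c ≤ G (c + h) - G (c - h) + L * h ^ 2 := by
  set φ : ℝ → ℝ := fun t => G (c + t) - G (c - t) - 2 * t * g c + L * t ^ 2
  have hφ : ∀ t ∈ Set.Icc 0 h,
      HasDerivAt φ (g (c + t) + g (c - t) - 2 * g c + 2 * L * t) t := by
    intro t ⟨ht0, hth⟩
    have hplus := (hG (c + t) ⟨by linarith, by linarith⟩).comp t ((hasDerivAt_id' t).const_add c)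
    have hminus := (hG (c - t) ⟨by linarith, by linarith⟩).comp t ((hasDerivAt_id' t).const_sub c)
    have h : HasDerivAt φ _ t := ((hplus.sub hminus).sub
      (((hasDerivAt_id' t).const_mul 2).mul_const (g c))).add ((hasDerivAt_pow 2 t).const_mul L)
    convert h using 1
    norm_num
    ring
  have hmono : MonotoneOn φ (Set.Icc 0 h) := by
    refine monotoneOn_of_hasDerivWithinAt_nonneg (convex_Icc 0 h)
      (fun t ht => (hφ t ht).continuousAt.continuousWithinAt)
      (fun t ht => (hφ t (interior_subset ht)).hasDerivWithinAt) fun t ht => ?_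
    rw [interior_Icc] at ht
    have h1 := hg (c + t) ⟨by linarith [ht.1], by linarith [ht.2]⟩
    have h2 := hg (c - t) ⟨by linarith [ht.2], by linarith [ht.1]⟩
    rw [add_sub_cancel_left, abs_of_pos ht.1, abs_le] at h1
    rw [sub_sub_cancel_left, abs_neg, abs_of_pos ht.1, abs_le] at h2
    linarith [h1.1, h2.1]
  have := hmono ⟨le_rfl, hh⟩ ⟨hh, le_rfl⟩ hh
  simp only [φ, add_zero, sub_zero, mul_zero, zero_pow two_ne_zero, sub_self] at this
  linarith

lemma log_sub_inv_le_log_sub_div {x m : ℝ} (hx : 0 < x) (hm : 1 < m) :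
    log x - (m - 1)⁻¹ ≤ log (x - x / m) := by
  have hm1 : m - 1 ≠ 0 := sub_ne_zero.mpr hm.ne'
  have hpos : 0 < (m - 1) / m := div_pos (by linarith) (by linarith)
  have hlog := one_sub_inv_le_log_of_pos hpos
  have hinv : 1 - ((m - 1) / m)⁻¹ = -(m - 1)⁻¹ := by field_simp; ring
  have hfactor : x - x / m = x * ((m - 1) / m) := by field_simp
  rw [hfactor, log_mul hx.ne' hpos.ne']
  linarith

lemma sq_mul_cos_le_sin_sq {x : ℝ} (h0 : 0 ≤ x) (h2 : x ≤ 2) : x ^ 2 * cos x ≤ sin x ^ 2 := by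
  have hsin : (x - x ^ 3 / 6) ^ 2 ≤ sin x ^ 2 :=
    pow_le_pow_left₀ (by nlinarith [mul_nonneg h0 (sq_nonneg x)]) (sin_ge_sub_cube h0) 2
  have hsin_half : (x / 2 - (x / 2) ^ 3 / 6) ^ 2 ≤ sin (x / 2) ^ 2 :=
    pow_le_pow_left₀ (by nlinarith [mul_nonneg h0 (sq_nonneg x)])
      (sin_ge_sub_cube (by linarith)) 2
  have hcos : cos x = 1 - 2 * sin (x / 2) ^ 2 := by
    rw [sin_sq_eq_half_sub, show 2 * (x / 2) = x by ring]; ring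
  rw [hcos]
  nlinarith [pow_nonneg h0 4, pow_nonneg h0 6, pow_nonneg h0 8]

lemma sum_Ico_inv_lt_log_add_eulerMascheroniConstant (n : ℕ) :
    ∑ l ∈ Ico 1 n, (l : ℝ)⁻¹ < log n + eulerMascheroniConstant := by
  cases n with
  | zero => simpa using one_half_lt_eulerMascheroniConstant.trans' (by norm_num)
  | succ m =>
    have := eulerMascheroniSeq_lt_eulerMascheroniConstant m
    rw [eulerMascheroniSeq, harmonic_eq_sum_Icc] at this
    push_cast at this ⊢
    rw [Ico_add_one_right_eq_Icc]
    linarith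

lemma sum_Ico_comp_sub (f : ℝ → ℝ) (n : ℕ) :
    ∑ l ∈ Ico 1 n, f (n - l) = ∑ l ∈ Ico 1 n, f l := by
  calc ∑ l ∈ Ico 1 n, f (n - l) = ∑ l ∈ Ico 1 n, (fun j : ℕ => f j) (n - l) :=
        sum_congr rfl fun l hl => by dsimp only; rw [Nat.cast_sub (mem_Ico.1 hl).2.le]
    _ = ∑ l ∈ Ico 1 n, f l := by
        rw [sum_Ico_reflect (fun j : ℕ => f j) 1 n.le_succ, Nat.add_sub_cancel_left,
          Nat.add_sub_cancel]

noncomputable def cscRemainder (x : ℝ) : ℝ := (sin x)⁻¹ - x⁻¹ - (π - x)⁻¹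

noncomputable def cscRemainderDeriv (x : ℝ) : ℝ := (x ^ 2)⁻¹ - cos x / sin x ^ 2 - ((π - x) ^ 2)⁻¹

noncomputable def cscRemainderPrimitive (x : ℝ) : ℝ := log (tan (x / 2)) - log x + log (π - x)

lemma hasDerivAt_cscRemainder {x : ℝ} (hx : sin x ≠ 0) :
    HasDerivAt cscRemainder (cscRemainderDeriv x) x := by
  have hx0 : x ≠ 0 := by rintro rfl; simp at hx
  have hxπ : π - x ≠ 0 := by
    intro h; rw [show x = π by linarith, sin_pi] at hx; exact hx rfl
  have h : HasDerivAt cscRemainder _ x := (((hasDerivAt_sin x).inv hx).sub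
    (hasDerivAt_inv hx0)).sub (((hasDerivAt_id' x).const_sub π).inv hxπ)
  convert h using 1
  rw [cscRemainderDeriv]
  ring

lemma hasDerivAt_cscRemainderPrimitive {x : ℝ} (h0 : 0 < x) (hπ : x < π) :
    HasDerivAt cscRemainderPrimitive (cscRemainder x) x := by
  have hcos : 0 < cos (x / 2) := cos_pos_of_mem_Ioo ⟨by linarith, by linarith⟩
  have htan : HasDerivAt (fun t => tan (t / 2)) (1 / cos (x / 2) ^ 2 * (1 / 2)) x :=
    (hasDerivAt_tan hcos.ne').comp (h := fun t => t / 2) x ((hasDerivAt_id' x).div_const 2)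
  have h : HasDerivAt cscRemainderPrimitive _ x :=
    ((htan.log (tan_pos_of_pos_of_lt_pi_div_two (by linarith) (by linarith)).ne').sub
      (hasDerivAt_log h0.ne')).add (((hasDerivAt_id' x).const_sub π).log (by linarith))
  convert h using 1
  rw [cscRemainder, show x = 2 * (x / 2) by ring, sin_two_mul, tan_eq_sin_div_cos]
  field_simp
  ring

lemma cscRemainderDeriv_pi_sub (x : ℝ) : cscRemainderDeriv (π - x) = -cscRemainderDeriv x := by
  simp only [cscRemainderDeriv, cos_pi_sub, sin_pi_sub, sub_sub_cancel]
  ring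

lemma abs_cscRemainderDeriv_le {x : ℝ} (h0 : 0 < x) (hπ : x < π) :
    |cscRemainderDeriv x| ≤ 9 / 20 := by
  wlog hx : x ≤ π / 2 generalizing x
  · rw [← sub_sub_cancel π x, cscRemainderDeriv_pi_sub, abs_neg]
    exact this (by linarith) (by linarith) (by linarith)
  have hsin : 0 < sin x := sin_pos_of_pos_of_lt_pi h0 hπ
  have hcos : 0 ≤ cos x := cos_nonneg_of_mem_Icc ⟨by linarith, hx⟩
  have hpi := pi_gt_d2
  have hpi' := pi_lt_d2
  have hA0 : cos x / sin x ^ 2 ≤ (x ^ 2)⁻¹ := by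
    rw [div_le_iff₀ (by positivity), inv_mul_eq_div, le_div_iff₀ (by positivity)]
    linarith [sq_mul_cos_le_sin_sq h0.le (by linarith)]
  have hA1 : (x ^ 2)⁻¹ - cos x / sin x ^ 2 ≤ 1 / 2 := by
    have h1 : cos x / x ^ 2 ≤ cos x / sin x ^ 2 :=
      div_le_div_of_nonneg_left hcos (by positivity) sin_sq_le_sq
    have h2 : (x ^ 2)⁻¹ - cos x / x ^ 2 ≤ 1 / 2 := by
      rw [inv_eq_one_div, div_sub_div_same, div_le_iff₀ (by positivity)]
      linarith [one_sub_sq_div_two_le_cos (x := x)]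
    linarith
  have hB0 : (π ^ 2)⁻¹ ≤ ((π - x) ^ 2)⁻¹ := by
    gcongr; linarith
  have hB1 : ((π - x) ^ 2)⁻¹ ≤ ((π / 2) ^ 2)⁻¹ := by
    gcongr; linarith
  have hπ0 : 1 / 20 ≤ (π ^ 2)⁻¹ := by
    rw [← one_div, one_div_le_one_div (by norm_num) (by positivity)]; nlinarith
  have hπ1 : ((π / 2) ^ 2)⁻¹ ≤ 9 / 20 := by
    rw [inv_le_comm₀ (by positivity) (by norm_num)]; nlinarith
  rw [abs_le, cscRemainderDeriv]
  constructor <;> linarith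

lemma abs_cscRemainder_sub_le {x y : ℝ} (hx : x ∈ Set.Ioo 0 π) (hy : y ∈ Set.Ioo 0 π) :
    |cscRemainder y - cscRemainder x| ≤ 9 / 20 * |y - x| :=
  (convex_Ioo 0 π).norm_image_sub_le_of_norm_hasDerivWithin_le
    (fun _ ht => (hasDerivAt_cscRemainder (sin_pos_of_pos_of_lt_pi ht.1 ht.2).ne').hasDerivWithinAt)
    (fun _ ht => abs_cscRemainderDeriv_le ht.1 ht.2) hx hy

lemma sum_cscRemainder_le_primitive {n : ℕ} (hn : 0 < n) :
    π / n * ∑ l ∈ Ico 1 n, cscRemainder (π * l / n) ≤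
      cscRemainderPrimitive (π - π / (2 * n)) - cscRemainderPrimitive (π / (2 * n)) +
        (n - 1) * (9 / 20 * (π / (2 * n)) ^ 2) := by
  set h := π / (2 * n) with hh
  have hh0 : 0 < h := by positivity
  have hnh : π / n = 2 * h := by rw [hh]; field_simp
  set f : ℕ → ℝ := fun k => cscRemainderPrimitive (π * k / n - h)
  have hnode : ∀ l ∈ Ico 1 n,
      π / n * cscRemainder (π * l / n) - 9 / 20 * h ^ 2 ≤ f (l + 1) - f l := by
    intro l hl
    rw [mem_Ico] at hl
    have hl1 : (1 : ℝ) ≤ l := by exact_mod_cast hl.1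
    have hln : (l : ℝ) + 1 ≤ n := by exact_mod_cast hl.2
    have hc : π * l / n = 2 * h * l := by rw [← hnh]; ring
    have hIcc : Set.Icc (π * l / n - h) (π * l / n + h) ⊆ Set.Ioo 0 π := by
      intro t ht
      rw [hc] at ht
      have : 2 * h * n = π := by rw [← hnh]; field_simp
      constructor <;> nlinarith [ht.1, ht.2]
    have := midpoint_rule_le hh0.le
      (fun t ht => hasDerivAt_cscRemainderPrimitive (hIcc ht).1 (hIcc ht).2)
      (fun t ht => abs_cscRemainder_sub_le (hIcc ⟨by linarith, by linarith⟩) (hIcc ht))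
    have hsucc : π * ((l + 1 : ℕ) : ℝ) / n - h = π * l / n + h := by
      push_cast; rw [mul_add, add_div, mul_one, hnh]; ring
    simp only [f, hsucc, hnh]
    linarith
  have hsum := sum_le_sum hnode
  rw [sum_sub_distrib, sum_Ico_sub f hn, ← mul_sum, sum_const, Nat.card_Ico, nsmul_eq_mul,
    Nat.cast_sub hn] at hsum
  have hfn : f n = cscRemainderPrimitive (π - h) := by simp only [f]; field_simp
  have hf1 : f 1 = cscRemainderPrimitive h := by
    simp only [f, Nat.cast_one, mul_one, hnh]; congr 1; ring
  rw [hfn, hf1] at hsum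
  push_cast at hsum
  linarith

lemma cscRemainderPrimitive_pi_sub_sub_le {h : ℝ} (h0 : 0 < h) (hπ : h < π) :
    cscRemainderPrimitive (π - h) - cscRemainderPrimitive h ≤ 2 * log 2 - 2 * log (π - h) := by
  have htan : log (h / 2) ≤ log (tan (h / 2)) :=
    log_le_log (by positivity) (le_tan (by positivity) (by linarith))
  have htan_refl : tan ((π - h) / 2) = (tan (h / 2))⁻¹ := by
    rw [show (π - h) / 2 = π / 2 - h / 2 by ring, tan_pi_div_two_sub]
  rw [log_div h0.ne' two_ne_zero] at htan
  simp only [cscRemainderPrimitive, htan_refl, log_inv, sub_sub_cancel]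
  linarith

lemma sum_cscRemainder_le {n : ℕ} (hn : 0 < n) :
    ∑ l ∈ Ico 1 n, cscRemainder (π * l / n) ≤
      2 * n / π * (log 2 - log π) + (2 * n / π / (2 * n - 1) + 9 * π * (n - 1) / (80 * n)) := by
  have hn1 : (1 : ℝ) ≤ n := by exact_mod_cast hn
  have hh : π / (2 * n) < π := div_lt_self pi_pos (by linarith)
  have hprim := sum_cscRemainder_le_primitive hn
  have hP := cscRemainderPrimitive_pi_sub_sub_le (by positivity) hh
  have hlog := log_sub_inv_le_log_sub_div pi_pos (show 1 < 2 * (n : ℝ) by linarith)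
  have hbound : π / n * ∑ l ∈ Ico 1 n, cscRemainder (π * l / n) ≤
      2 * (log 2 - log π) + 2 * (2 * (n : ℝ) - 1)⁻¹ + (n - 1) * (9 / 20 * (π / (2 * n)) ^ 2) := by
    linarith
  rw [← le_div_iff₀' (by positivity)] at hbound
  refine hbound.trans_eq ?_
  field_simp
  ring

lemma sum_inv_add_inv_pi_sub (n : ℕ) :
    ∑ l ∈ Ico 1 n, ((π * l / n)⁻¹ + (π - π * l / n)⁻¹) =
      2 * (n / π) * ∑ l ∈ Ico 1 n, (l : ℝ)⁻¹ := by
  have hrefl : ∑ l ∈ Ico 1 n, (π - π * l / n)⁻¹ = ∑ l ∈ Ico 1 n, (π * l / n)⁻¹ := by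
    rcases n.eq_zero_or_pos with rfl | hn
    · rfl
    rw [← sum_Ico_comp_sub (fun y => (π * y / n)⁻¹) n]
    exact sum_congr rfl fun l _ => by field_simp
  rw [sum_add_distrib, hrefl, ← two_mul, mul_assoc]
  congr 1
  rw [mul_sum]
  exact sum_congr rfl fun l _ => by rw [div_eq_mul_inv, mul_inv, mul_inv, inv_inv]; ring

lemma two_mul_div_pi_div_add_le {N : ℝ} (hN : 1 ≤ N) :
    2 * N / π / (2 * N - 1) + 9 * π * (N - 1) / (80 * N) ≤ 1 - 1 / π := by
  have hpi := pi_gt_d2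
  have hpi' := pi_lt_d2
  have hN' : 0 < 2 * N - 1 := by linarith
  have hgap : 1 - 1 / π - (2 * N / π / (2 * N - 1) + 9 * π * (N - 1) / (80 * N)) =
      (80 * N * (2 * N - 1) * (π - 1) - 160 * N ^ 2 - 9 * π ^ 2 * (N - 1) * (2 * N - 1)) /
        (80 * π * N * (2 * N - 1)) := by
    field_simp
    ring
  rw [← sub_nonneg, hgap]
  apply div_nonneg _ (by positivity)
  have ha : 0 < 160 * π - 320 - 18 * π ^ 2 := by
    nlinarith [mul_pos (sub_pos.2 hpi) (sub_pos.2 hpi')]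
  have hb : 0 < 27 * π ^ 2 - 80 * π + 80 := by nlinarith
  have hfactor : 80 * N * (2 * N - 1) * (π - 1) - 160 * N ^ 2 - 9 * π ^ 2 * (N - 1) * (2 * N - 1) =
      (N - 1) * ((160 * π - 320 - 18 * π ^ 2) * (N + 1) + (27 * π ^ 2 - 80 * π + 80)) +
        (80 * π - 240) := by ring
  rw [hfactor]
  have : 0 ≤ (N - 1) * ((160 * π - 320 - 18 * π ^ 2) * (N + 1) + (27 * π ^ 2 - 80 * π + 80)) :=
    mul_nonneg (by linarith) (by nlinarith)
  linarith

theorem csc_sum_upper_bound (n : ℕ) (hn : 2 ≤ n) :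
    ∑ l ∈ Finset.Ico 1 n, (Real.sin (π * l / n))⁻¹ <
      (2 * n / π) * (Real.log (2 * n / π) + Real.eulerMascheroniConstant) + 1 - 1 / π := by
  have hn0 : 0 < n := by omega
  have hsplit : ∑ l ∈ Ico 1 n, (sin (π * l / n))⁻¹ =
      ∑ l ∈ Ico 1 n, ((π * l / n)⁻¹ + (π - π * l / n)⁻¹) +
        ∑ l ∈ Ico 1 n, cscRemainder (π * l / n) := by
    rw [← sum_add_distrib]
    exact sum_congr rfl fun l _ => by rw [cscRemainder]; ring
  have hconst := two_mul_div_pi_div_add_le (N := n) (by exact_mod_cast hn0)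
  have hlog : log (2 * n / π) = log 2 + log n - log π := by
    rw [log_div (by positivity) pi_ne_zero, log_mul two_ne_zero (by positivity)]
  calc _ = 2 * (n / π) * ∑ l ∈ Ico 1 n, (l : ℝ)⁻¹ + ∑ l ∈ Ico 1 n, cscRemainder (π * l / n) := by
        rw [hsplit, sum_inv_add_inv_pi_sub]
    _ < 2 * (n / π) * (log n + eulerMascheroniConstant) +
          (2 * n / π * (log 2 - log π) + (1 - 1 / π)) := by
        refine add_lt_add_of_lt_of_le ?_ (by linarith [sum_cscRemainder_le hn0])
        gcongr
        exact sum_Ico_inv_lt_log_add_eulerMascheroniConstant n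
    _ = _ := by rw [hlog]; ring
end
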